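/- arXiv:2603.17005 — 5 statements merged into one kernel-verified Lean document; each statement's English description precedes it below -/
import Mathlib

section
/- Quantum Sibson identity for the Petz Rényi divergence: Let A and B be nonempty finite types, α ∈ (0,1), ρ_AB a bipartite state on A × B, and σ_A a state on A. Let N be the matrix on B given by N b b' := ∑ a, ((σ_A^α ⊗ 1_B) · ρ_AB^(1−α)) (a,b) (a,b') (the partial trace over A of (σ_A^α ⊗ 1_B) · ρ_AB^(1−α)), and assume Tr N ≠ 0. Define τ̂_B := N^(1/(1−α)) / Tr[N^(1/(1−α))]. Then τ̂_B is a state on B and for every state τ_B on B: (i) Q_α(σ_A ⊗ τ_B ‖ ρ_AB) = Q_α(σ_A ⊗ τ̂_B ‖ ρ_AB) · Q_α(τ_B ‖ τ̂_B); (ii) D_α(σ_A ⊗ τ_B ‖ ρ_AB) = D_α(σ_A ⊗ τ̂_B ‖ ρ_AB) + D_α(τ_B ‖ τ̂_B), where both sides are +∞ exactly when Q_α(τ_B ‖ τ̂_B) = 0. -/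
open scoped BigOperators Kronecker ComplexOrder

noncomputable section

/-- Matrix power on the support via spectral decomposition (convention `0 ^ p = 0`);
junk value `0` for non-Hermitian matrices. -/
noncomputable def mpow {A : Type*} [Fintype A] [DecidableEq A] (X : Matrix A A ℂ) (p : ℝ) :
    Matrix A A ℂ :=
  if h : X.IsHermitian then
    (h.eigenvectorUnitary : Matrix A A ℂ) *
      Matrix.diagonal (fun i =>
        ((if h.eigenvalues i = 0 then (0 : ℝ) else (h.eigenvalues i) ^ p : ℝ) : ℂ)) *
      (star (h.eigenvectorUnitary : Matrix A A ℂ))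
  else 0

/-- Matrix logarithm via spectral decomposition (`Real.log 0 = 0`); junk value `0`
for non-Hermitian matrices. -/
noncomputable def mlog {A : Type*} [Fintype A] [DecidableEq A] (X : Matrix A A ℂ) :
    Matrix A A ℂ :=
  if h : X.IsHermitian then
    (h.eigenvectorUnitary : Matrix A A ℂ) *
      Matrix.diagonal (fun i => ((Real.log (h.eigenvalues i) : ℝ) : ℂ)) *
      (star (h.eigenvectorUnitary : Matrix A A ℂ))
  else 0

/-- A quantum state: a positive semidefinite matrix with unit trace. -/
structure MState (A : Type*) [Fintype A] [DecidableEq A] where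
  mat : Matrix A A ℂ
  posSemidef : mat.PosSemidef
  trace_one : mat.trace = 1

/-- `Q_α(ρ‖σ) = Tr[ρ^α σ^(1-α)]`. -/
noncomputable def QRenyi {A : Type*} [Fintype A] [DecidableEq A] (α : ℝ)
    (ρ σ : Matrix A A ℂ) : ℝ :=
  ((mpow ρ α * mpow σ (1 - α)).trace).re

/-- Petz Rényi divergence `D_α(ρ‖σ)`, valued in `(-∞,∞]`. -/
noncomputable def DRenyi {A : Type*} [Fintype A] [DecidableEq A] (α : ℝ)
    (ρ σ : Matrix A A ℂ) : EReal :=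
  if QRenyi α ρ σ = 0 then ⊤ else (((α - 1)⁻¹ * Real.log (QRenyi α ρ σ) : ℝ) : EReal)

-- Quantum relative entropy `D(ρ‖σ)`, valued in `(-∞,∞]`.
open Classical in
noncomputable def relEnt {A : Type*} [Fintype A] [DecidableEq A] (ρ σ : Matrix A A ℂ) : EReal :=
  if LinearMap.ker (Matrix.toLin' σ) ≤ LinearMap.ker (Matrix.toLin' ρ) then
    (((ρ * (mlog ρ - mlog σ)).trace).re : EReal)
  else ⊤

/-- Doubly minimized Petz Rényi lautum information. -/
noncomputable def Ldd {A B : Type*} [Fintype A] [DecidableEq A] [Fintype B] [DecidableEq B]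
    (α : ℝ) (ρ : Matrix (A × B) (A × B) ℂ) : EReal :=
  ⨅ (σ : MState A) (τ : MState B), DRenyi α (σ.mat ⊗ₖ τ.mat) ρ

/-- Tumula information. -/
noncomputable def Tum {A B : Type*} [Fintype A] [DecidableEq A] [Fintype B] [DecidableEq B]
    (ρ : Matrix (A × B) (A × B) ℂ) : EReal :=
  ⨅ (σ : MState A) (τ : MState B), relEnt (σ.mat ⊗ₖ τ.mat) ρ

/-- Partial trace over the first factor. -/
noncomputable def ptrA {A B : Type*} [Fintype A] (M : Matrix (A × B) (A × B) ℂ) :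
    Matrix B B ℂ :=
  Matrix.of fun b b' => ∑ a, M (a, b) (a, b')

/-- Partial trace over the second factor. -/
noncomputable def ptrB {A B : Type*} [Fintype B] (M : Matrix (A × B) (A × B) ℂ) :
    Matrix A A ℂ :=
  Matrix.of fun a a' => ∑ b, M (a, b) (a', b)

/-! Tracing out `A` turns `Q_α(σ ⊗ τ ‖ ρ)` into `Re Tr[τ^α N]`. With `t = Tr N^(1/(1-α)) > 0`, the
state `τ̂ = N^(1/(1-α)) / t` satisfies `τ̂^(1-α) = t^(α-1) N`, hence
`Q_α(τ ‖ τ̂) = t^(α-1) Re Tr[τ^α N]`, while `Q_α(σ ⊗ τ̂ ‖ ρ) = Re Tr[τ̂^α N] = t^(1-α)`. Multiplying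
gives the identity for `Q_α`; taking logarithms, the one for `D_α`.

Matrix powers are handled by the continuous functional calculus:
`mpow X p = cfc (supportRpow p) X`. -/

namespace Matrix

variable {n : Type*} [Fintype n] [DecidableEq n]

theorem diagonal_comp_mul_eq_mul_diagonal_comp {R : Type*} [CommRing R] [NoZeroDivisors R]
    {a b : n → R} {M : Matrix n n R} (h : diagonal a * M = M * diagonal b) (f : R → R) :
    diagonal (f ∘ a) * M = M * diagonal (f ∘ b) := by
  ext i j
  have hij : a i * M i j = b j * M i j := by
    simpa [mul_comm] using congr_fun₂ h i j
  simp only [diagonal_mul, mul_diagonal, Function.comp_apply]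
  rcases eq_or_ne (M i j) 0 with h0 | h0
  · simp [h0]
  · rw [mul_right_cancel₀ h0 hij, mul_comm]

theorem unitary_conj_diagonal_comp_eq {R : Type*} [CommRing R] [StarRing R] [NoZeroDivisors R]
    {U V : Matrix n n R} (hU : U ∈ unitary (Matrix n n R)) (hV : V ∈ unitary (Matrix n n R))
    {a b : n → R} (h : U * diagonal a * star U = V * diagonal b * star V) (f : R → R) :
    U * diagonal (f ∘ a) * star U = V * diagonal (f ∘ b) * star V := by
  set M := star U * V
  have hM : diagonal a * M = M * diagonal b := by
    calc diagonal a * M = star U * (U * diagonal a * star U) * V := by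
          simp only [M, ← mul_assoc, Unitary.star_mul_self_of_mem hU, one_mul]
      _ = star U * (V * diagonal b * star V) * V := by rw [h]
      _ = M * diagonal b := by
          simp only [M, mul_assoc, Unitary.star_mul_self_of_mem hV, mul_one]
  calc U * diagonal (f ∘ a) * star U = U * (diagonal (f ∘ a) * M) * star V := by
        simp only [M, mul_assoc, Unitary.mul_star_self_of_mem hV, mul_one]
    _ = U * (M * diagonal (f ∘ b)) * star V := by
        rw [diagonal_comp_mul_eq_mul_diagonal_comp hM f]
    _ = V * diagonal (f ∘ b) * star V := by
        simp only [M, ← mul_assoc, Unitary.mul_star_self_of_mem hU, one_mul]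

variable {𝕜 : Type*} [RCLike 𝕜]

theorem IsHermitian.eq_unitary_conj_diagonal {X : Matrix n n 𝕜} (hX : X.IsHermitian) :
    X = (hX.eigenvectorUnitary : Matrix n n 𝕜) * diagonal (RCLike.ofReal ∘ hX.eigenvalues) *
      star (hX.eigenvectorUnitary : Matrix n n 𝕜) := by
  simpa only [Unitary.conjStarAlgAut_apply] using hX.spectral_theorem

theorem cfc_unitary_conj_diagonal {U : Matrix n n 𝕜} (hU : U ∈ unitary (Matrix n n 𝕜))
    (d : n → ℝ) (f : ℝ → ℝ) :
    cfc f (U * diagonal (RCLike.ofReal ∘ d) * star U) =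
      U * diagonal (RCLike.ofReal ∘ f ∘ d) * star U := by
  have hX : (U * diagonal (RCLike.ofReal ∘ d) * star U).IsHermitian :=
    IsSelfAdjoint.conjugate
      (isHermitian_diagonal_iff.mpr fun i => by simp [IsSelfAdjoint]).isSelfAdjoint U
  rw [hX.cfc_eq, IsHermitian.cfc, Unitary.conjStarAlgAut_apply]
  have key := unitary_conj_diagonal_comp_eq hX.eigenvectorUnitary.2 hU
    hX.eq_unitary_conj_diagonal.symm (RCLike.ofReal ∘ f ∘ RCLike.re)
  simpa [Function.comp_def] using key

theorem cfc_kronecker {m : Type*} [Fintype m] [DecidableEq m] {X : Matrix m m 𝕜}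
    {Y : Matrix n n 𝕜} (hX : X.IsHermitian) (hY : Y.IsHermitian) {f : ℝ → ℝ}
    (hf : ∀ x ∈ spectrum ℝ X, ∀ y ∈ spectrum ℝ Y, f (x * y) = f x * f y) :
    cfc f (X ⊗ₖ Y) = cfc f X ⊗ₖ cfc f Y := by
  have hXY : X ⊗ₖ Y = ((hX.eigenvectorUnitary : Matrix m m 𝕜) ⊗ₖ hY.eigenvectorUnitary) *
      diagonal (RCLike.ofReal ∘ fun i => hX.eigenvalues i.1 * hY.eigenvalues i.2) *
      star ((hX.eigenvectorUnitary : Matrix m m 𝕜) ⊗ₖ hY.eigenvectorUnitary) := by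
    conv_lhs => rw [hX.eq_unitary_conj_diagonal, hY.eq_unitary_conj_diagonal]
    simp [star_eq_conjTranspose, conjTranspose_kronecker, mul_kronecker_mul,
      diagonal_kronecker_diagonal, Function.comp_def]
  rw [hXY, cfc_unitary_conj_diagonal (kronecker_mem_unitary hX.eigenvectorUnitary.2
    hY.eigenvectorUnitary.2), hX.cfc_eq, hY.cfc_eq, IsHermitian.cfc, IsHermitian.cfc]
  simp [star_eq_conjTranspose, conjTranspose_kronecker, mul_kronecker_mul,
    diagonal_kronecker_diagonal, Function.comp_def,
    hf _ (hX.eigenvalues_mem_spectrum_real _) _ (hY.eigenvalues_mem_spectrum_real _)]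

theorem PosSemidef.nonneg_of_mem_spectrum {X : Matrix n n 𝕜} (hX : X.PosSemidef) {x : ℝ}
    (hx : x ∈ spectrum ℝ X) : 0 ≤ x := by
  obtain ⟨i, rfl⟩ := hX.1.spectrum_real_eq_range_eigenvalues ▸ hx
  exact hX.eigenvalues_nonneg i

end Matrix

def supportRpow (p x : ℝ) : ℝ := if x = 0 then 0 else x ^ p

section supportRpow

variable {x y : ℝ}

theorem supportRpow_of_ne_zero (hx : x ≠ 0) (p : ℝ) : supportRpow p x = x ^ p :=
  if_neg hx

theorem supportRpow_nonneg (hx : 0 ≤ x) (p : ℝ) : 0 ≤ supportRpow p x := by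
  unfold supportRpow; split_ifs
  exacts [le_rfl, Real.rpow_nonneg hx p]

theorem supportRpow_one (x : ℝ) : supportRpow 1 x = x := by
  unfold supportRpow; split_ifs with hx <;> simp [hx]

theorem supportRpow_add (hx : 0 ≤ x) (p q : ℝ) :
    supportRpow (p + q) x = supportRpow p x * supportRpow q x := by
  rcases hx.eq_or_lt with rfl | hx
  · simp [supportRpow]
  · simp only [supportRpow_of_ne_zero hx.ne', Real.rpow_add hx]

theorem supportRpow_supportRpow (hx : 0 ≤ x) (p q : ℝ) :
    supportRpow q (supportRpow p x) = supportRpow (p * q) x := by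
  rcases hx.eq_or_lt with rfl | hx
  · simp [supportRpow]
  · rw [supportRpow_of_ne_zero hx.ne', supportRpow_of_ne_zero (Real.rpow_pos_of_pos hx p).ne',
      supportRpow_of_ne_zero hx.ne', Real.rpow_mul hx.le]

theorem supportRpow_mul (hx : 0 ≤ x) (hy : 0 ≤ y) (p : ℝ) :
    supportRpow p (x * y) = supportRpow p x * supportRpow p y := by
  rcases hx.eq_or_lt with rfl | hx
  · simp [supportRpow]
  rcases hy.eq_or_lt with rfl | hy
  · simp [supportRpow]
  rw [supportRpow_of_ne_zero (mul_pos hx hy).ne', supportRpow_of_ne_zero hx.ne',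
    supportRpow_of_ne_zero hy.ne', Real.mul_rpow hx.le hy.le]

end supportRpow

section mpow

variable {n : Type*} [Fintype n] [DecidableEq n] {X : Matrix n n ℂ}

open Matrix

theorem mpow_eq_cfc (X : Matrix n n ℂ) (p : ℝ) : mpow X p = cfc (supportRpow p) X := by
  by_cases hX : X.IsHermitian
  · rw [hX.cfc_eq, IsHermitian.cfc, Unitary.conjStarAlgAut_apply, mpow, dif_pos hX]
    rfl
  · rw [mpow, dif_neg hX]
    exact (cfc_apply_of_not_predicate (R := ℝ) X hX).symm

open scoped MatrixOrder in
theorem Matrix.PosSemidef.mpow (hX : X.PosSemidef) (p : ℝ) : (mpow X p).PosSemidef := by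
  rw [mpow_eq_cfc]
  exact (cfc_nonneg fun x hx => supportRpow_nonneg (hX.nonneg_of_mem_spectrum hx) p).posSemidef

theorem mpow_one (hX : X.IsHermitian) : mpow X 1 = X := by
  rw [mpow_eq_cfc, funext supportRpow_one]
  exact cfc_id' ℝ X hX

theorem mpow_zero_left (p : ℝ) : mpow (0 : Matrix n n ℂ) p = 0 := by
  simp [mpow_eq_cfc, supportRpow]

theorem mpow_mul_mpow (hX : X.PosSemidef) (p q : ℝ) :
    mpow X p * mpow X q = mpow X (p + q) := by
  simp only [mpow_eq_cfc]
  rw [← cfc_mul _ _ X (X.finite_real_spectrum.continuousOn _)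
    (X.finite_real_spectrum.continuousOn _)]
  exact cfc_congr fun x hx => (supportRpow_add (hX.nonneg_of_mem_spectrum hx) p q).symm

theorem mpow_mpow (hX : X.PosSemidef) (p q : ℝ) : mpow (mpow X p) q = mpow X (p * q) := by
  simp only [mpow_eq_cfc]
  rw [← cfc_comp (supportRpow q) (supportRpow p) X hX.1.isSelfAdjoint
    ((X.finite_real_spectrum.image _).continuousOn _) (X.finite_real_spectrum.continuousOn _)]
  exact cfc_congr fun x hx => supportRpow_supportRpow (hX.nonneg_of_mem_spectrum hx) p q

theorem mpow_smul (hX : X.PosSemidef) {r : ℝ} (hr : 0 < r) (p : ℝ) :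
    mpow (r • X) p = r ^ p • mpow X p := by
  simp only [mpow_eq_cfc]
  rw [← cfc_comp_smul r (supportRpow p) X ((X.finite_real_spectrum.image _).continuousOn _)
    hX.1.isSelfAdjoint, ← cfc_const_mul _ _ X (X.finite_real_spectrum.continuousOn _)]
  refine cfc_congr fun x hx => ?_
  rw [smul_eq_mul, supportRpow_mul hr.le (hX.nonneg_of_mem_spectrum hx),
    supportRpow_of_ne_zero hr.ne']

theorem mpow_ne_zero (hX : X.PosSemidef) (hX0 : X ≠ 0) {p : ℝ} (hp : p ≠ 0) : mpow X p ≠ 0 := by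
  intro h
  apply hX0
  rw [← mpow_one hX.1, ← mul_inv_cancel₀ hp, ← mpow_mpow hX, h, mpow_zero_left]

theorem mpow_kronecker {m : Type*} [Fintype m] [DecidableEq m] {Y : Matrix m m ℂ}
    (hX : X.PosSemidef) (hY : Y.PosSemidef) (p : ℝ) :
    mpow (X ⊗ₖ Y) p = mpow X p ⊗ₖ mpow Y p := by
  simp only [mpow_eq_cfc]
  exact cfc_kronecker hX.1 hY.1 fun x hx y hy =>
    supportRpow_mul (hX.nonneg_of_mem_spectrum hx) (hY.nonneg_of_mem_spectrum hy) p

end mpow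

section ptrA

variable {A B : Type*} [Fintype A]

open Matrix

theorem ptrA_eq_sum_submatrix (M : Matrix (A × B) (A × B) ℂ) :
    ptrA M = ∑ a, M.submatrix (Prod.mk a) (Prod.mk a) := by
  ext b b'
  simp [ptrA, Matrix.sum_apply]

theorem Matrix.PosSemidef.ptrA {M : Matrix (A × B) (A × B) ℂ} (hM : M.PosSemidef) :
    (ptrA M).PosSemidef := by
  rw [ptrA_eq_sum_submatrix]
  exact posSemidef_sum _ fun a _ => hM.submatrix _

theorem ptrA_kronecker_one_mul_comm [Fintype B] [DecidableEq B] (P : Matrix A A ℂ)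
    (M : Matrix (A × B) (A × B) ℂ) :
    ptrA ((P ⊗ₖ (1 : Matrix B B ℂ)) * M) = ptrA (M * (P ⊗ₖ (1 : Matrix B B ℂ))) := by
  ext b b'
  simp only [ptrA, of_apply, mul_apply, kroneckerMap_apply, Fintype.sum_prod_type, one_apply,
    mul_ite, mul_zero, ite_mul, zero_mul, mul_one, Finset.sum_ite_eq,
    Finset.sum_ite_eq', Finset.mem_univ, if_true]
  rw [Finset.sum_comm]
  simp only [mul_comm]

theorem trace_one_kronecker_mul [DecidableEq A] [Fintype B] [DecidableEq B] (X : Matrix B B ℂ)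
    (M : Matrix (A × B) (A × B) ℂ) :
    (((1 : Matrix A A ℂ) ⊗ₖ X) * M).trace = (X * ptrA M).trace := by
  simp only [trace, diag_apply, mul_apply, kroneckerMap_apply, ptrA, of_apply,
    Fintype.sum_prod_type, one_apply, ite_mul, one_mul, zero_mul, Finset.sum_ite_irrel,
    Finset.sum_const_zero, Finset.sum_ite_eq, Finset.mem_univ, if_true, Finset.mul_sum]
  rw [Finset.sum_comm]
  exact Finset.sum_congr rfl fun b _ => Finset.sum_comm

open scoped MatrixOrder in
theorem posSemidef_ptrA_kronecker_one_mul [DecidableEq A] [Fintype B] [DecidableEq B]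
    {S : Matrix A A ℂ} {R : Matrix (A × B) (A × B) ℂ} (hS : S.PosSemidef) (hR : R.PosSemidef) :
    (ptrA ((S ⊗ₖ (1 : Matrix B B ℂ)) * R)).PosSemidef := by
  obtain ⟨C, rfl⟩ := CStarAlgebra.nonneg_iff_eq_star_mul_self.mp hS.nonneg
  have hC : (star C ⊗ₖ (1 : Matrix B B ℂ)) = (C ⊗ₖ (1 : Matrix B B ℂ))ᴴ := by
    rw [conjTranspose_kronecker, conjTranspose_one, star_eq_conjTranspose]
  rw [← one_mul (1 : Matrix B B ℂ), mul_kronecker_mul, mul_assoc, ptrA_kronecker_one_mul_comm, hC]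
  exact (hR.mul_mul_conjTranspose_same _).ptrA

end ptrA

section Renyi

variable {A B C : Type*} [Fintype A] [DecidableEq A] [Fintype B] [DecidableEq B]
  [Fintype C] [DecidableEq C]

open Matrix

theorem QRenyi_kronecker {σ : Matrix A A ℂ} {τ : Matrix B B ℂ} (hσ : σ.PosSemidef)
    (hτ : τ.PosSemidef) (α : ℝ) (ρ : Matrix (A × B) (A × B) ℂ) :
    QRenyi α (σ ⊗ₖ τ) ρ =
      (mpow τ α * ptrA ((mpow σ α ⊗ₖ (1 : Matrix B B ℂ)) * mpow ρ (1 - α))).trace.re := by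
  have hsplit : mpow σ α ⊗ₖ mpow τ α =
      ((1 : Matrix A A ℂ) ⊗ₖ mpow τ α) * (mpow σ α ⊗ₖ (1 : Matrix B B ℂ)) := by
    rw [← mul_kronecker_mul, one_mul, mul_one]
  rw [QRenyi, mpow_kronecker hσ hτ, hsplit, mul_assoc, trace_one_kronecker_mul]

theorem DRenyi_eq_top_iff (α : ℝ) (ρ σ : Matrix A A ℂ) :
    DRenyi α ρ σ = ⊤ ↔ QRenyi α ρ σ = 0 := by
  unfold DRenyi
  split_ifs with h
  · simp [h]
  · exact iff_of_false (EReal.coe_ne_top _) h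

theorem DRenyi_eq_add_of_QRenyi_eq_mul {α : ℝ} {ρ₁ σ₁ : Matrix A A ℂ} {ρ₂ σ₂ : Matrix B B ℂ}
    {ρ₃ σ₃ : Matrix C C ℂ} (h : QRenyi α ρ₁ σ₁ = QRenyi α ρ₂ σ₂ * QRenyi α ρ₃ σ₃)
    (h₂ : QRenyi α ρ₂ σ₂ ≠ 0) :
    DRenyi α ρ₁ σ₁ = DRenyi α ρ₂ σ₂ + DRenyi α ρ₃ σ₃ := by
  by_cases h₃ : QRenyi α ρ₃ σ₃ = 0
  · rw [(DRenyi_eq_top_iff α ρ₁ σ₁).mpr (by rw [h, h₃, mul_zero]),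
      (DRenyi_eq_top_iff α ρ₃ σ₃).mpr h₃, DRenyi, if_neg h₂, EReal.coe_add_top]
  · rw [DRenyi, DRenyi, DRenyi, if_neg (h ▸ mul_ne_zero h₂ h₃), if_neg h₂, if_neg h₃,
      ← EReal.coe_add, h, Real.log_mul h₂ h₃, mul_add]

end Renyi

section sibsonState

variable {n : Type*} [Fintype n] [DecidableEq n] {N : Matrix n n ℂ} {α : ℝ}

open Matrix

def sibsonState (α : ℝ) (N : Matrix n n ℂ) : Matrix n n ℂ :=
  ((mpow N (1 / (1 - α))).trace)⁻¹ • mpow N (1 / (1 - α))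

theorem re_trace_mpow_pos (hN : N.PosSemidef) (hN0 : N.trace ≠ 0) {p : ℝ} (hp : p ≠ 0) :
    0 < (mpow N p).trace.re := by
  have hK := hN.mpow p
  have hK0 : (mpow N p).trace ≠ 0 :=
    hK.trace_eq_zero_iff.not.mpr (mpow_ne_zero hN (by rintro rfl; simp at hN0) hp)
  exact (Complex.pos_iff.mp (hK.trace_nonneg.lt_of_ne hK0.symm)).1

theorem sibsonState_eq_smul (hN : N.PosSemidef) (α : ℝ) :
    sibsonState α N = ((mpow N (1 / (1 - α))).trace.re)⁻¹ • mpow N (1 / (1 - α)) := by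
  rw [sibsonState, Complex.eq_re_of_ofReal_le (hN.mpow _).trace_nonneg, ← Complex.ofReal_inv,
    Complex.coe_smul, Complex.ofReal_re]

theorem posSemidef_sibsonState (hN : N.PosSemidef) (α : ℝ) : (sibsonState α N).PosSemidef := by
  rw [sibsonState_eq_smul hN]
  exact (hN.mpow _).smul (inv_nonneg.mpr (Complex.nonneg_iff.mp (hN.mpow _).trace_nonneg).1)

theorem trace_sibsonState (hN : N.PosSemidef) (hN0 : N.trace ≠ 0) (hα : α ≠ 1) :
    (sibsonState α N).trace = 1 := by
  have hp : 1 / (1 - α) ≠ 0 := one_div_ne_zero (sub_ne_zero.mpr hα.symm)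
  rw [sibsonState, trace_smul, smul_eq_mul, inv_mul_cancel₀]
  exact fun h => (re_trace_mpow_pos hN hN0 hp).ne' (by rw [h, Complex.zero_re])

theorem re_trace_mpow_sibsonState_mul (hN : N.PosSemidef) (hN0 : N.trace ≠ 0) (hα : α ≠ 1) :
    (mpow (sibsonState α N) α * N).trace.re = (mpow N (1 / (1 - α))).trace.re ^ (1 - α) := by
  have ht := re_trace_mpow_pos hN hN0 (one_div_ne_zero (sub_ne_zero.mpr hα.symm))
  have hK : mpow N (1 / (1 - α) * α) * N = mpow N (1 / (1 - α)) := by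
    calc mpow N (1 / (1 - α) * α) * N = mpow N (1 / (1 - α) * α) * mpow N 1 := by
          rw [mpow_one hN.1]
      _ = mpow N (1 / (1 - α)) := by
          rw [mpow_mul_mpow hN]
          congr 1
          field_simp [sub_ne_zero.mpr hα.symm]
          ring
  rw [sibsonState_eq_smul hN, mpow_smul (hN.mpow _) (inv_pos.mpr ht), mpow_mpow hN,
    smul_mul_assoc, hK, trace_smul, Complex.smul_re, smul_eq_mul, Real.inv_rpow ht.le,
    ← Real.rpow_neg ht.le, ← Real.rpow_add_one ht.ne']
  ring_nf

theorem QRenyi_sibsonState (hN : N.PosSemidef) (hN0 : N.trace ≠ 0) (hα : α ≠ 1)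
    (τ : Matrix n n ℂ) :
    QRenyi α τ (sibsonState α N) =
      (mpow N (1 / (1 - α))).trace.re ^ (α - 1) * (mpow τ α * N).trace.re := by
  have ht := re_trace_mpow_pos hN hN0 (one_div_ne_zero (sub_ne_zero.mpr hα.symm))
  rw [QRenyi, sibsonState_eq_smul hN, mpow_smul (hN.mpow _) (inv_pos.mpr ht), mpow_mpow hN,
    one_div_mul_cancel (sub_ne_zero.mpr hα.symm), mpow_one hN.1, mul_smul_comm, trace_smul,
    Complex.smul_re, smul_eq_mul, Real.inv_rpow ht.le, ← Real.rpow_neg ht.le, neg_sub]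

theorem re_trace_mpow_mul_eq_mul_QRenyi_sibsonState (hN : N.PosSemidef) (hN0 : N.trace ≠ 0)
    (hα : α ≠ 1) (τ : Matrix n n ℂ) :
    (mpow τ α * N).trace.re =
      (mpow (sibsonState α N) α * N).trace.re * QRenyi α τ (sibsonState α N) := by
  have ht := re_trace_mpow_pos hN hN0 (one_div_ne_zero (sub_ne_zero.mpr hα.symm))
  rw [re_trace_mpow_sibsonState_mul hN hN0 hα, QRenyi_sibsonState hN hN0 hα, ← mul_assoc,
    ← Real.rpow_add ht, sub_add_sub_cancel', sub_self, Real.rpow_zero, one_mul]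

end sibsonState

theorem sibson_identity_general {A B : Type*} [Fintype A] [DecidableEq A]
    [Fintype B] [DecidableEq B]
    (α : ℝ) (hα : α ∈ Set.Ioo (0 : ℝ) 1)
    (ρ : MState (A × B)) (σ : MState A)
    (N : Matrix B B ℂ)
    (hN : N = ptrA ((mpow σ.mat α ⊗ₖ (1 : Matrix B B ℂ)) * mpow ρ.mat (1 - α)))
    (hNtr : N.trace ≠ 0)
    (τhat : Matrix B B ℂ)
    (hτhat : τhat = ((mpow N (1 / (1 - α))).trace)⁻¹ • mpow N (1 / (1 - α))) :
    τhat.PosSemidef ∧ τhat.trace = 1 ∧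
      ∀ τ : MState B,
        (QRenyi α (σ.mat ⊗ₖ τ.mat) ρ.mat =
            QRenyi α (σ.mat ⊗ₖ τhat) ρ.mat * QRenyi α τ.mat τhat) ∧
        (DRenyi α (σ.mat ⊗ₖ τ.mat) ρ.mat =
            DRenyi α (σ.mat ⊗ₖ τhat) ρ.mat + DRenyi α τ.mat τhat) ∧
        (DRenyi α (σ.mat ⊗ₖ τ.mat) ρ.mat = ⊤ ↔ QRenyi α τ.mat τhat = 0) := by
  have hα1 : α ≠ 1 := hα.2.ne
  have hNpsd : N.PosSemidef :=
    hN ▸ posSemidef_ptrA_kronecker_one_mul (σ.posSemidef.mpow α) (ρ.posSemidef.mpow (1 - α))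
  obtain rfl : τhat = sibsonState α N := hτhat
  have hτhat_psd := posSemidef_sibsonState hNpsd α
  have hQhat_pos : 0 < QRenyi α (σ.mat ⊗ₖ sibsonState α N) ρ.mat := by
    rw [QRenyi_kronecker σ.posSemidef hτhat_psd, ← hN,
      re_trace_mpow_sibsonState_mul hNpsd hNtr hα1]
    exact Real.rpow_pos_of_pos
      (re_trace_mpow_pos hNpsd hNtr (one_div_ne_zero (sub_ne_zero.mpr hα1.symm))) _
  refine ⟨hτhat_psd, trace_sibsonState hNpsd hNtr hα1, fun τ => ?_⟩
  have hQ : QRenyi α (σ.mat ⊗ₖ τ.mat) ρ.mat =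
      QRenyi α (σ.mat ⊗ₖ sibsonState α N) ρ.mat * QRenyi α τ.mat (sibsonState α N) := by
    rw [QRenyi_kronecker σ.posSemidef τ.posSemidef, QRenyi_kronecker σ.posSemidef hτhat_psd, ← hN]
    exact re_trace_mpow_mul_eq_mul_QRenyi_sibsonState hNpsd hNtr hα1 τ.mat
  refine ⟨hQ, DRenyi_eq_add_of_QRenyi_eq_mul hQ hQhat_pos.ne', ?_⟩
  rw [DRenyi_eq_top_iff, hQ, mul_eq_zero, or_iff_right hQhat_pos.ne']

/-- Quantum Sibson identity for the Petz Rényi divergence. -/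
theorem sibson_identity {A B : Type*} [Fintype A] [DecidableEq A] [Nonempty A]
    [Fintype B] [DecidableEq B] [Nonempty B]
    (α : ℝ) (hα : α ∈ Set.Ioo (0 : ℝ) 1)
    (ρ : MState (A × B)) (σ : MState A)
    (N : Matrix B B ℂ)
    (hN : N = ptrA ((mpow σ.mat α ⊗ₖ (1 : Matrix B B ℂ)) * mpow ρ.mat (1 - α)))
    (hNtr : N.trace ≠ 0)
    (τhat : Matrix B B ℂ)
    (hτhat : τhat = ((mpow N (1 / (1 - α))).trace)⁻¹ • mpow N (1 / (1 - α))) :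
    τhat.PosSemidef ∧ τhat.trace = 1 ∧
      ∀ τ : MState B,
        (QRenyi α (σ.mat ⊗ₖ τ.mat) ρ.mat =
            QRenyi α (σ.mat ⊗ₖ τhat) ρ.mat * QRenyi α τ.mat τhat) ∧
        (DRenyi α (σ.mat ⊗ₖ τ.mat) ρ.mat =
            DRenyi α (σ.mat ⊗ₖ τhat) ρ.mat + DRenyi α τ.mat τhat) ∧
        (DRenyi α (σ.mat ⊗ₖ τ.mat) ρ.mat = ⊤ ↔ QRenyi α τ.mat τhat = 0) :=
  sibson_identity_general α hα ρ σ N hN hNtr τhat hτhat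

end
end

section
/- Convexity in the Rényi order (Theorem 1(j)): Let A and B be nonempty finite types and ρ_AB a bipartite state on A × B. Then the real-valued function α ↦ (α − 1) · L_α^↓↓(A:B)_ρ is convex on the open interval (0,1) (where L_α^↓↓(A:B)_ρ is finite for every α ∈ (0,1)). -/
open scoped BigOperators Kronecker ComplexOrder

noncomputable section

/-! Diagonalising both arguments, `Q_α(X‖Y) = ∑ᵢⱼ |⟨xᵢ, yⱼ⟩|² λᵢ ^ α μⱼ ^ (1 - α)`, where the
overlaps `|⟨xᵢ, yⱼ⟩|²` form a doubly stochastic matrix. Each summand is log-affine in `α`, so by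
Hölder's inequality `α ↦ Q_α(X‖Y)` is log-convex, and so is the supremum `G(α)` of
`Q_α(σ ⊗ τ‖ρ)` over product states, which is at most `1` by AM–GM and positive at the maximally
mixed state. Since `t ↦ (α - 1)⁻¹ log t` is antitone and continuous at `G(α)`, the infimum
defining `L_α^↓↓` equals `(α - 1)⁻¹ log G(α)`, so `(α - 1) L_α^↓↓ = log G(α)` is finite and
convex. -/

open Matrix Real

def suppRpow (t p : ℝ) : ℝ := if t = 0 then 0 else t ^ p

lemma suppRpow_nonneg {t : ℝ} (ht : 0 ≤ t) (p : ℝ) : 0 ≤ suppRpow t p := by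
  unfold suppRpow; split_ifs
  exacts [le_rfl, rpow_nonneg ht p]

lemma suppRpow_pos {t : ℝ} (ht : 0 < t) (p : ℝ) : 0 < suppRpow t p := by
  rw [suppRpow, if_neg ht.ne']; exact rpow_pos_of_pos ht p

lemma suppRpow_le_rpow {t : ℝ} (ht : 0 ≤ t) (p : ℝ) : suppRpow t p ≤ t ^ p := by
  unfold suppRpow; split_ifs
  exacts [rpow_nonneg ht p, le_rfl]

lemma suppRpow_mul_add_mul {t : ℝ} (ht : 0 ≤ t) {a b : ℝ} (ha : a ≠ 0) (hb : b ≠ 0) (x y : ℝ) :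
    suppRpow t (a * x + b * y) = suppRpow t x ^ a * suppRpow t y ^ b := by
  rcases ht.eq_or_lt with rfl | ht
  · simp [suppRpow, zero_rpow ha, zero_rpow hb]
  · simp only [suppRpow, if_neg ht.ne', rpow_add ht, mul_comm a, mul_comm b, rpow_mul ht.le]

lemma sum_rpow_mul_rpow_le {ι : Type*} (s : Finset ι) {u v : ι → ℝ} (hu : ∀ i ∈ s, 0 ≤ u i)
    (hv : ∀ i ∈ s, 0 ≤ v i) {a b : ℝ} (ha : 0 < a) (hb : 0 < b) (hab : a + b = 1) :
    ∑ i ∈ s, u i ^ a * v i ^ b ≤ (∑ i ∈ s, u i) ^ a * (∑ i ∈ s, v i) ^ b := by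
  have key := inner_le_Lp_mul_Lq_of_nonneg s (holderConjugate_one_div ha hb hab)
    (fun i hi => rpow_nonneg (hu i hi) a) (fun i hi => rpow_nonneg (hv i hi) b)
  have hu' : ∀ i ∈ s, (u i ^ a) ^ (1 / a) = u i := fun i hi => by
    rw [← rpow_mul (hu i hi), mul_one_div_cancel ha.ne', rpow_one]
  have hv' : ∀ i ∈ s, (v i ^ b) ^ (1 / b) = v i := fun i hi => by
    rw [← rpow_mul (hv i hi), mul_one_div_cancel hb.ne', rpow_one]
  rwa [Finset.sum_congr rfl hu', Finset.sum_congr rfl hv', one_div_one_div, one_div_one_div]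
    at key

/-- Log-convexity, phrased multiplicatively so that `f` may vanish. -/
def LogConvexOn (s : Set ℝ) (f : ℝ → ℝ) : Prop :=
  ∀ ⦃x⦄, x ∈ s → ∀ ⦃y⦄, y ∈ s → ∀ ⦃a b : ℝ⦄, 0 < a → 0 < b → a + b = 1 →
    f (a * x + b * y) ≤ f x ^ a * f y ^ b

namespace LogConvexOn

variable {s : Set ℝ} {f g : ℝ → ℝ}

lemma mul (hf : LogConvexOn s f) (hg : LogConvexOn s g) (hf₀ : 0 ≤ f) (hg₀ : 0 ≤ g) :
    LogConvexOn s fun x => f x * g x := by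
  intro x hx y hy a b ha hb hab
  calc f (a * x + b * y) * g (a * x + b * y)
      ≤ (f x ^ a * f y ^ b) * (g x ^ a * g y ^ b) :=
        mul_le_mul (hf hx hy ha hb hab) (hg hx hy ha hb hab) (hg₀ _)
          (mul_nonneg (rpow_nonneg (hf₀ x) a) (rpow_nonneg (hf₀ y) b))
    _ = (f x * g x) ^ a * (f y * g y) ^ b := by
        rw [mul_rpow (hf₀ x) (hg₀ x), mul_rpow (hf₀ y) (hg₀ y)]; ring

lemma sum {ι : Type*} (t : Finset ι) {f : ι → ℝ → ℝ} (hf : ∀ i ∈ t, LogConvexOn s (f i))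
    (hf₀ : ∀ i ∈ t, 0 ≤ f i) : LogConvexOn s fun x => ∑ i ∈ t, f i x := by
  intro x hx y hy a b ha hb hab
  calc ∑ i ∈ t, f i (a * x + b * y)
      ≤ ∑ i ∈ t, f i x ^ a * f i y ^ b := Finset.sum_le_sum fun i hi => hf i hi hx hy ha hb hab
    _ ≤ _ := sum_rpow_mul_rpow_le t (fun i hi => hf₀ i hi x) (fun i hi => hf₀ i hi y)
        ha hb hab

lemma ciSup {ι : Sort*} [Nonempty ι] {f : ι → ℝ → ℝ} (hf : ∀ i, LogConvexOn s (f i))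
    (hf₀ : ∀ i, 0 ≤ f i) (hbdd : ∀ x ∈ s, BddAbove (Set.range fun i => f i x)) :
    LogConvexOn s fun x => ⨆ i, f i x := by
  intro x hx y hy a b ha hb hab
  refine ciSup_le fun i => (hf i hx hy ha hb hab).trans ?_
  exact mul_le_mul (rpow_le_rpow (hf₀ i x) (le_ciSup (hbdd x hx) i) ha.le)
    (rpow_le_rpow (hf₀ i y) (le_ciSup (hbdd y hy) i) hb.le) (rpow_nonneg (hf₀ i y) b)
    (rpow_nonneg ((hf₀ i x).trans (le_ciSup (hbdd x hx) i)) a)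

lemma convexOn_log (hf : LogConvexOn s f) (hs : Convex ℝ s) (hf₀ : ∀ x ∈ s, 0 < f x) :
    ConvexOn ℝ s fun x => log (f x) := by
  refine ⟨hs, fun x hx y hy a b ha hb hab => ?_⟩
  rcases ha.eq_or_lt with rfl | ha
  · simp_all
  rcases hb.eq_or_lt with rfl | hb
  · simp_all
  calc log (f (a * x + b * y)) ≤ log (f x ^ a * f y ^ b) :=
        log_le_log (hf₀ _ (hs hx hy ha.le hb.le hab)) (hf hx hy ha hb hab)
    _ = a * log (f x) + b * log (f y) := by
        rw [log_mul (rpow_pos_of_pos (hf₀ x hx) a).ne' (rpow_pos_of_pos (hf₀ y hy) b).ne',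
          log_rpow (hf₀ x hx), log_rpow (hf₀ y hy)]

end LogConvexOn

lemma logConvexOn_suppRpow {t : ℝ} (ht : 0 ≤ t) (s : Set ℝ) :
    LogConvexOn s (suppRpow t) := fun x _ y _ _ _ ha hb _ =>
  (suppRpow_mul_add_mul ht ha.ne' hb.ne' x y).le

lemma logConvexOn_suppRpow_one_sub {t : ℝ} (ht : 0 ≤ t) (s : Set ℝ) :
    LogConvexOn s fun p => suppRpow t (1 - p) := by
  intro x _ y _ a b ha hb hab
  dsimp only
  rw [show 1 - (a * x + b * y) = a * (1 - x) + b * (1 - y) by linear_combination -hab]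
  exact (suppRpow_mul_add_mul ht ha.ne' hb.ne' _ _).le

lemma logConvexOn_const {c : ℝ} (hc : 0 ≤ c) (s : Set ℝ) : LogConvexOn s fun _ => c :=
  fun _ _ _ _ a b _ _ hab => by
    dsimp only
    rw [← rpow_add' hc (by rw [hab]; exact one_ne_zero), hab, rpow_one]

lemma Matrix.map_normSq_mem_doublyStochastic {n : Type*} [Fintype n] [DecidableEq n]
    {W : Matrix n n ℂ} (hW : W ∈ unitaryGroup n ℂ) :
    W.map Complex.normSq ∈ doublyStochastic ℝ n := by
  refine mem_doublyStochastic_iff_sum.2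
    ⟨fun i j => Complex.normSq_nonneg _, fun i => ?_, fun j => ?_⟩
  · have h := congrFun (congrFun (mem_unitaryGroup_iff.1 hW) i) i
    simp only [mul_apply, star_apply, RCLike.star_def, Complex.mul_conj, one_apply_eq] at h
    simpa using (congrArg Complex.re h)
  · have h := congrFun (congrFun (mem_unitaryGroup_iff'.1 hW) j) j
    simp only [mul_apply, star_apply, RCLike.star_def, one_apply_eq, mul_comm (starRingEnd ℂ _),
      Complex.mul_conj] at h
    simpa using (congrArg Complex.re h)

lemma Matrix.trace_diagonal_mul_mul_diagonal_mul_star {n : Type*} [Fintype n] [DecidableEq n]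
    (d e : n → ℂ) (W : Matrix n n ℂ) :
    (diagonal d * W * diagonal e * star W).trace =
      ∑ i, ∑ j, d i * e j * (W i j * star (W i j)) := by
  simp only [trace, diag_apply, mul_apply (N := star W), mul_diagonal, diagonal_mul, star_apply]
  exact Finset.sum_congr rfl fun i _ => Finset.sum_congr rfl fun j _ => by ring

namespace Matrix.IsHermitian

variable {n : Type*} [Fintype n] [DecidableEq n] {X Y : Matrix n n ℂ}

lemma mpow_eq (hX : X.IsHermitian) (p : ℝ) :
    mpow X p = (hX.eigenvectorUnitary : Matrix n n ℂ) *
      diagonal (fun i => ((suppRpow (hX.eigenvalues i) p : ℝ) : ℂ)) *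
      star (hX.eigenvectorUnitary : Matrix n n ℂ) := by
  rw [mpow, dif_pos hX]; rfl

/-- `|⟨xᵢ, yⱼ⟩|²` for the eigenbases `(xᵢ)` of `X` and `(yⱼ)` of `Y`. -/
def overlap (hX : X.IsHermitian) (hY : Y.IsHermitian) : Matrix n n ℝ :=
  (star (hX.eigenvectorUnitary : Matrix n n ℂ) * hY.eigenvectorUnitary).map Complex.normSq

lemma overlap_mem_doublyStochastic (hX : X.IsHermitian) (hY : Y.IsHermitian) :
    overlap hX hY ∈ doublyStochastic ℝ n :=
  map_normSq_mem_doublyStochastic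
    (mul_mem (Unitary.star_mem hX.eigenvectorUnitary.2) hY.eigenvectorUnitary.2)

lemma trace_mpow_mul_mpow (hX : X.IsHermitian) (hY : Y.IsHermitian) (p q : ℝ) :
    (mpow X p * mpow Y q).trace = ((∑ i, ∑ j, overlap hX hY i j *
      suppRpow (hX.eigenvalues i) p * suppRpow (hY.eigenvalues j) q : ℝ) : ℂ) := by
  set U := (hX.eigenvectorUnitary : Matrix n n ℂ)
  set V := (hY.eigenvectorUnitary : Matrix n n ℂ)
  set D := diagonal fun i => ((suppRpow (hX.eigenvalues i) p : ℝ) : ℂ)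
  set E := diagonal fun j => ((suppRpow (hY.eigenvalues j) q : ℝ) : ℂ)
  have hcycle :
      (mpow X p * mpow Y q).trace = (D * (star U * V) * E * star (star U * V)).trace := by
    rw [hX.mpow_eq, hY.mpow_eq, Matrix.mul_assoc U, Matrix.mul_assoc U, trace_mul_comm]
    simp only [star_mul, star_star, Matrix.mul_assoc]; rfl
  rw [hcycle, trace_diagonal_mul_mul_diagonal_mul_star]
  push_cast
  refine Finset.sum_congr rfl fun i _ => Finset.sum_congr rfl fun j _ => ?_
  rw [overlap, map_apply, RCLike.star_def, Complex.mul_conj]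
  ring

lemma sum_eigenvalues_eq_one (hX : X.IsHermitian) (htr : X.trace = 1) :
    ∑ i, hX.eigenvalues i = 1 := by
  have h := congrArg Complex.re hX.trace_eq_sum_eigenvalues
  rw [htr] at h
  simpa using h.symm

end Matrix.IsHermitian

section QRenyi

variable {n : Type*} [Fintype n] [DecidableEq n] {X Y : Matrix n n ℂ}

lemma QRenyi_eq_sum_overlap (hX : X.IsHermitian) (hY : Y.IsHermitian) (α : ℝ) :
    QRenyi α X Y = ∑ i, ∑ j, hX.overlap hY i j *
      suppRpow (hX.eigenvalues i) α * suppRpow (hY.eigenvalues j) (1 - α) := by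
  rw [QRenyi, hX.trace_mpow_mul_mpow hY, Complex.ofReal_re]

lemma overlap_mul_suppRpow_mul_suppRpow_nonneg (hX : X.PosSemidef) (hY : Y.PosSemidef)
    (α : ℝ) (i j : n) : 0 ≤ hX.1.overlap hY.1 i j *
      suppRpow (hX.1.eigenvalues i) α * suppRpow (hY.1.eigenvalues j) (1 - α) :=
  mul_nonneg (mul_nonneg (nonneg_of_mem_doublyStochastic (hX.1.overlap_mem_doublyStochastic hY.1))
    (suppRpow_nonneg (hX.eigenvalues_nonneg i) α)) (suppRpow_nonneg (hY.eigenvalues_nonneg j) _)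

lemma QRenyi_nonneg (hX : X.PosSemidef) (hY : Y.PosSemidef) (α : ℝ) : 0 ≤ QRenyi α X Y := by
  rw [QRenyi_eq_sum_overlap hX.1 hY.1]
  exact Finset.sum_nonneg fun i _ => Finset.sum_nonneg fun j _ =>
    overlap_mul_suppRpow_mul_suppRpow_nonneg hX hY α i j

lemma logConvexOn_QRenyi (hX : X.PosSemidef) (hY : Y.PosSemidef) (s : Set ℝ) :
    LogConvexOn s fun α => QRenyi α X Y := by
  simp only [QRenyi_eq_sum_overlap hX.1 hY.1]
  have hP := hX.1.overlap_mem_doublyStochastic hY.1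
  have hx := hX.eigenvalues_nonneg
  have hy := hY.eigenvalues_nonneg
  have hterm := overlap_mul_suppRpow_mul_suppRpow_nonneg hX hY
  refine LogConvexOn.sum _ (fun i _ => LogConvexOn.sum _ (fun j _ => ?_)
    fun j _ α => hterm α i j) fun i _ α => Finset.sum_nonneg fun j _ => hterm α i j
  exact ((logConvexOn_const (nonneg_of_mem_doublyStochastic hP) s).mul
    (logConvexOn_suppRpow (hx i) s) (fun _ => nonneg_of_mem_doublyStochastic hP)
    (fun α => suppRpow_nonneg (hx i) α)).mul (logConvexOn_suppRpow_one_sub (hy j) s)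
    (fun α => mul_nonneg (nonneg_of_mem_doublyStochastic hP) (suppRpow_nonneg (hx i) α))
    (fun α => suppRpow_nonneg (hy j) _)

lemma sum_doublyStochastic_mul_suppRpow_le_one {P : Matrix n n ℝ}
    (hP : P ∈ doublyStochastic ℝ n) {x y : n → ℝ} (hx : 0 ≤ x) (hy : 0 ≤ y)
    (hx₁ : ∑ i, x i = 1) (hy₁ : ∑ j, y j = 1) {α : ℝ} (h0 : 0 ≤ α) (h1 : α ≤ 1) :
    ∑ i, ∑ j, P i j * suppRpow (x i) α * suppRpow (y j) (1 - α) ≤ 1 := by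
  have hterm : ∀ i j, P i j * suppRpow (x i) α * suppRpow (y j) (1 - α) ≤
      α * (x i * P i j) + (1 - α) * (y j * P i j) := fun i j => by
    have hgm : suppRpow (x i) α * suppRpow (y j) (1 - α) ≤ α * x i + (1 - α) * y j :=
      (mul_le_mul (suppRpow_le_rpow (hx i) α) (suppRpow_le_rpow (hy j) _)
        (suppRpow_nonneg (hy j) _) (rpow_nonneg (hx i) α)).trans
      (geom_mean_le_arith_mean2_weighted h0 (by linarith) (hx i) (hy j) (by ring))
    nlinarith [nonneg_of_mem_doublyStochastic hP (i := i) (j := j)]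
  calc ∑ i, ∑ j, P i j * suppRpow (x i) α * suppRpow (y j) (1 - α)
      ≤ ∑ i, ∑ j, (α * (x i * P i j) + (1 - α) * (y j * P i j)) :=
        Finset.sum_le_sum fun i _ => Finset.sum_le_sum fun j _ => hterm i j
    _ = α * ∑ i, x i * ∑ j, P i j + (1 - α) * ∑ j, y j * ∑ i, P i j := by
        simp only [Finset.sum_add_distrib, Finset.mul_sum]
        rw [Finset.sum_comm (f := fun i j => (1 - α) * (y j * P i j))]
    _ = 1 := by
        simp only [sum_row_of_mem_doublyStochastic hP, sum_col_of_mem_doublyStochastic hP, mul_one,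
          hx₁, hy₁]
        ring

lemma QRenyi_le_one (hX : X.PosSemidef) (hY : Y.PosSemidef) (hXtr : X.trace = 1)
    (hYtr : Y.trace = 1) {α : ℝ} (h0 : 0 ≤ α) (h1 : α ≤ 1) : QRenyi α X Y ≤ 1 := by
  rw [QRenyi_eq_sum_overlap hX.1 hY.1]
  exact sum_doublyStochastic_mul_suppRpow_le_one (hX.1.overlap_mem_doublyStochastic hY.1)
    hX.eigenvalues_nonneg hY.eigenvalues_nonneg (hX.1.sum_eigenvalues_eq_one hXtr)
    (hY.1.sum_eigenvalues_eq_one hYtr) h0 h1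

lemma QRenyi_pos (hX : X.PosDef) (hY : Y.PosSemidef) (hY0 : Y ≠ 0) (α : ℝ) :
    0 < QRenyi α X Y := by
  have hP := hX.1.overlap_mem_doublyStochastic hY.1
  obtain ⟨j, hj⟩ : ∃ j, hY.1.eigenvalues j ≠ 0 := by
    by_contra! h
    exact hY0 (hY.1.eigenvalues_eq_zero_iff.1 (funext h))
  obtain ⟨i, -, hi⟩ := Finset.exists_ne_zero_of_sum_ne_zero
    ((sum_col_of_mem_doublyStochastic hP j).trans_ne one_ne_zero)
  have hterm := overlap_mul_suppRpow_mul_suppRpow_nonneg hX.posSemidef hY α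
  rw [QRenyi_eq_sum_overlap hX.1 hY.1]
  refine Finset.sum_pos' (fun i _ => Finset.sum_nonneg fun j _ => hterm i j)
    ⟨i, Finset.mem_univ i, Finset.sum_pos' (fun j _ => hterm i j) ⟨j, Finset.mem_univ j, ?_⟩⟩
  exact mul_pos (mul_pos ((nonneg_of_mem_doublyStochastic hP).lt_of_ne' hi)
    (suppRpow_pos (hX.eigenvalues_pos i) α))
    (suppRpow_pos ((hY.eigenvalues_nonneg j).lt_of_ne' hj) _)

end QRenyi

lemma iInf_ite_eq_zero_top_mul_log {ι : Sort*} [Nonempty ι] {f : ι → ℝ} (hf₀ : ∀ i, 0 ≤ f i)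
    (hbdd : BddAbove (Set.range f)) (hpos : 0 < ⨆ i, f i) {c : ℝ} (hc : c ≤ 0) :
    ⨅ i, (if f i = 0 then ⊤ else ((c * log (f i) : ℝ) : EReal)) =
      ((c * log (⨆ i, f i) : ℝ) : EReal) := by
  set φ : ℝ → EReal := fun t => if t = 0 then ⊤ else ((c * log t : ℝ) : EReal)
  have hanti : AntitoneOn φ (Set.range f) := by
    rintro _ ⟨i, rfl⟩ _ ⟨j, rfl⟩ hij
    rcases (hf₀ i).eq_or_lt with hi | hi
    · simp [φ, ← hi]
    · simp only [φ, if_neg hi.ne', if_neg (hi.trans_le hij).ne']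
      exact EReal.coe_le_coe_iff.2 (mul_le_mul_of_nonpos_left (log_le_log hi hij) hc)
  have hcont : ContinuousAt φ (⨆ i, f i) := by
    have : ContinuousAt (fun t => ((c * log t : ℝ) : EReal)) (⨆ i, f i) :=
      continuous_coe_real_ereal.continuousAt.comp
        (continuousAt_const.mul (continuousAt_log hpos.ne'))
    exact this.congr (by filter_upwards [eventually_ne_nhds hpos.ne'] with t ht; simp [φ, ht])
  have := hanti.map_csSup_of_continuousWithinAt hcont.continuousWithinAt (Set.range_nonempty f)
    hbdd
  rw [← Set.range_comp] at this
  exact this.symm.trans (if_neg hpos.ne')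

namespace MState

variable {A B : Type*} [Fintype A] [DecidableEq A] [Fintype B] [DecidableEq B]

def kron (σ : MState A) (τ : MState B) : MState (A × B) where
  mat := σ.mat ⊗ₖ τ.mat
  posSemidef := σ.posSemidef.kronecker τ.posSemidef
  trace_one := by rw [trace_kronecker, σ.trace_one, τ.trace_one, mul_one]

variable (A) in
def maximallyMixed [Nonempty A] : MState A where
  mat := (Fintype.card A : ℝ)⁻¹ • 1
  posSemidef := (PosDef.one.smul (by positivity)).posSemidef
  trace_one := by
    rw [trace_smul, Matrix.trace_one, Complex.real_smul]
    push_cast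
    exact inv_mul_cancel₀ (Nat.cast_ne_zero.2 Fintype.card_ne_zero)

instance [Nonempty A] : Nonempty (MState A) := ⟨maximallyMixed A⟩

lemma maximallyMixed_kron_posDef [Nonempty A] [Nonempty B] :
    ((maximallyMixed A).kron (maximallyMixed B)).mat.PosDef :=
  (PosDef.one.smul (by positivity)).kronecker (PosDef.one.smul (by positivity))

end MState

section ProductStates

variable {A B : Type*} [Fintype A] [DecidableEq A] [Fintype B] [DecidableEq B]

def supQRenyiKron (α : ℝ) (ρ : Matrix (A × B) (A × B) ℂ) : ℝ :=
  ⨆ στ : MState A × MState B, QRenyi α (στ.1.mat ⊗ₖ στ.2.mat) ρ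

lemma bddAbove_range_QRenyi_kron (ρ : MState (A × B)) {α : ℝ} (h0 : 0 ≤ α) (h1 : α ≤ 1) :
    BddAbove (Set.range fun στ : MState A × MState B =>
      QRenyi α (στ.1.mat ⊗ₖ στ.2.mat) ρ.mat) :=
  ⟨1, Set.forall_mem_range.2 fun στ => QRenyi_le_one (στ.1.kron στ.2).posSemidef ρ.posSemidef
    (στ.1.kron στ.2).trace_one ρ.trace_one h0 h1⟩

variable [Nonempty A] [Nonempty B]

lemma supQRenyiKron_pos (ρ : MState (A × B)) {α : ℝ} (h0 : 0 ≤ α) (h1 : α ≤ 1) :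
    0 < supQRenyiKron α ρ.mat := by
  have hρ : ρ.mat ≠ 0 := fun h => by simpa [h] using ρ.trace_one
  exact (QRenyi_pos MState.maximallyMixed_kron_posDef ρ.posSemidef hρ α).trans_le
    (le_ciSup (bddAbove_range_QRenyi_kron ρ h0 h1)
      (MState.maximallyMixed A, MState.maximallyMixed B))

lemma logConvexOn_supQRenyiKron (ρ : MState (A × B)) :
    LogConvexOn (Set.Icc 0 1) fun α => supQRenyiKron α ρ.mat :=
  LogConvexOn.ciSup (fun στ => logConvexOn_QRenyi (στ.1.kron στ.2).posSemidef ρ.posSemidef _)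
    (fun στ => QRenyi_nonneg (στ.1.kron στ.2).posSemidef ρ.posSemidef)
    fun _ hα => bddAbove_range_QRenyi_kron ρ hα.1 hα.2

lemma Ldd_eq_log_supQRenyiKron (ρ : MState (A × B)) {α : ℝ} (h0 : 0 ≤ α) (h1 : α < 1) :
    Ldd α ρ.mat = (((α - 1)⁻¹ * log (supQRenyiKron α ρ.mat) : ℝ) : EReal) := by
  rw [Ldd, ← iInf_prod (f := fun στ : MState A × MState B =>
    DRenyi α (στ.1.mat ⊗ₖ στ.2.mat) ρ.mat)]
  exact iInf_ite_eq_zero_top_mul_log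
    (fun στ => QRenyi_nonneg (στ.1.kron στ.2).posSemidef ρ.posSemidef α)
    (bddAbove_range_QRenyi_kron ρ h0 h1.le) (supQRenyiKron_pos ρ h0 h1.le)
    (inv_nonpos.2 (by linarith))

end ProductStates

/-- Convexity in the Rényi order (Theorem 1(j)): `α ↦ (α - 1) L_α^{↓↓}` is convex on
`(0,1)`, where `L_α^{↓↓}` is finite for every `α ∈ (0,1)`. -/
theorem Ldd_mul_convex {A B : Type*} [Fintype A] [DecidableEq A] [Nonempty A]
    [Fintype B] [DecidableEq B] [Nonempty B] (ρ : MState (A × B)) :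
    (∀ α ∈ Set.Ioo (0 : ℝ) 1, Ldd α ρ.mat ≠ ⊤) ∧
      ConvexOn ℝ (Set.Ioo (0 : ℝ) 1) (fun α => (α - 1) * (Ldd α ρ.mat).toReal) := by
  have hL : ∀ α ∈ Set.Ioo (0 : ℝ) 1, Ldd α ρ.mat =
      (((α - 1)⁻¹ * log (supQRenyiKron α ρ.mat) : ℝ) : EReal) :=
    fun α hα => Ldd_eq_log_supQRenyiKron ρ hα.1.le hα.2
  refine ⟨fun α hα => hL α hα ▸ EReal.coe_ne_top _, ?_⟩
  have hlog : ConvexOn ℝ (Set.Icc 0 1) fun α => log (supQRenyiKron α ρ.mat) :=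
    (logConvexOn_supQRenyiKron ρ).convexOn_log (convex_Icc 0 1)
      fun α hα => supQRenyiKron_pos ρ hα.1 hα.2
  refine (hlog.subset Set.Ioo_subset_Icc_self (convex_Ioo 0 1)).congr fun α hα => ?_
  rw [hL α hα, EReal.toReal_coe, ← mul_assoc, mul_inv_cancel₀ (by linarith [hα.2]), one_mul]
end
end

section
/- Gibbs-form partial minimizer for the tumula information (Theorem 2(a)): Let A and B be nonempty finite types, ρ_AB a positive definite bipartite state on A × B, and σ_A a state on A. Let M be the matrix on B given by M b b' := ∑ a, ((σ_A ⊗ 1_B) · log ρ_AB) (a,b) (a,b') (the partial trace over A of (σ_A ⊗ 1_B) · log ρ_AB), where log ρ_AB is obtained by applying Real.log to the eigenvalues in a spectral decomposition of ρ_AB. Define τ*_B := exp(M) / Tr[exp(M)], where exp is the matrix exponential. Then τ*_B is a state on B and for every state τ_B on B, D(σ_A ⊗ τ*_B ‖ ρ_AB) ≤ D(σ_A ⊗ τ_B ‖ ρ_AB). -/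
open scoped BigOperators Kronecker ComplexOrder

noncomputable section

/-!
Since `ρ` is positive definite, `D(σ ⊗ τ ‖ ρ) = Tr[σ log σ] + Tr[τ log τ] - Tr[τ M]`, so only the
free energy `F_M(τ) = Tr[τ log τ] - Tr[τ M]` depends on `τ`. The Gibbs variational principle
says that `F_M` is minimised by `exp M / Tr[exp M]`, where it equals `-log Tr[exp M]`. For a
general state `τ` with spectrum `q`, its diagonal `s` in an eigenbasis of `M` is the image of `q`
under the doubly stochastic matrix `|Uᵢₖ|²`, so Jensen's inequality for `x log x` gives
`∑ s log s ≤ Tr[τ log τ]`, and the classical Gibbs inequality `∑ s (m - log s) ≤ log ∑ exp m`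
finishes the argument.
-/

open Matrix

section Classical

variable {ι : Type*} [Fintype ι]

lemma ConvexOn.sum_map_mulVec_le [DecidableEq ι] {S : Matrix ι ι ℝ}
    (hS : S ∈ doublyStochastic ℝ ι) {t : Set ℝ} {φ : ℝ → ℝ} (hφ : ConvexOn ℝ t φ) {x : ι → ℝ}
    (hx : ∀ i, x i ∈ t) : ∑ j, φ ((S *ᵥ x) j) ≤ ∑ i, φ (x i) := by
  obtain ⟨hS0, hrow, hcol⟩ := mem_doublyStochastic_iff_sum.mp hS
  calc ∑ j, φ ((S *ᵥ x) j) ≤ ∑ j, ∑ i, S j i * φ (x i) :=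
        Finset.sum_le_sum fun j _ => by
          simpa [mulVec, dotProduct] using
            hφ.map_sum_le (t := Finset.univ) (w := S j) (p := x) (fun i _ => hS0 j i) (hrow j)
              (fun i _ => hx i)
    _ = ∑ i, φ (x i) := by
        rw [Finset.sum_comm]
        simp only [← Finset.sum_mul, hcol, one_mul]

lemma mul_sub_log_le_exp_sub {s : ℝ} (hs : 0 ≤ s) (y : ℝ) :
    s * (y - Real.log s) ≤ Real.exp y - s := by
  rcases hs.eq_or_lt with rfl | hs
  · simpa using (Real.exp_pos y).le
  have h := Real.add_one_le_exp (y - Real.log s)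
  rw [Real.exp_sub, Real.exp_log hs, le_div_iff₀ hs] at h
  linarith

lemma sum_mul_sub_log_le_log_sum_exp {s : ι → ℝ} (hs0 : ∀ i, 0 ≤ s i) (hs1 : ∑ i, s i = 1)
    (m : ι → ℝ) : ∑ i, s i * (m i - Real.log (s i)) ≤ Real.log (∑ i, Real.exp (m i)) := by
  have : Nonempty ι := by
    by_contra h
    simp [not_nonempty_iff.mp h] at hs1
  set Z := ∑ i, Real.exp (m i)
  have hZ : 0 < Z := Finset.sum_pos (fun i _ => Real.exp_pos _) Finset.univ_nonempty
  have hZZ : (∑ i, Real.exp (m i)) / Z = 1 := div_self hZ.ne'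
  have key := Finset.sum_le_sum fun i (_ : i ∈ Finset.univ) =>
    mul_sub_log_le_exp_sub (hs0 i) (m i - Real.log Z)
  simp only [Real.exp_sub, Real.exp_log hZ, Finset.sum_sub_distrib, ← Finset.sum_div, hs1, mul_sub,
    ← Finset.sum_mul, one_mul] at key ⊢
  linarith

lemma sum_mul_sub_log_exp_div_eq [Nonempty ι] (m : ι → ℝ) :
    ∑ i, Real.exp (m i) / (∑ k, Real.exp (m k))
      * (m i - Real.log (Real.exp (m i) / ∑ k, Real.exp (m k)))
      = Real.log (∑ i, Real.exp (m i)) := by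
  have hZ : 0 < ∑ k, Real.exp (m k) :=
    Finset.sum_pos (fun i _ => Real.exp_pos _) Finset.univ_nonempty
  simp only [Real.log_div (Real.exp_pos _).ne' hZ.ne', Real.log_exp, sub_sub_cancel]
  rw [← Finset.sum_mul, ← Finset.sum_div, div_self hZ.ne', one_mul]

lemma sum_mul_log_mul_eq {κ : Type*} [Fintype κ] {p : ι → ℝ} {q : κ → ℝ}
    (hp : ∑ i, p i = 1) (hq : ∑ j, q j = 1) :
    ∑ ij : ι × κ, p ij.1 * q ij.2 * Real.log (p ij.1 * q ij.2)
      = ∑ i, p i * Real.log (p i) + ∑ j, q j * Real.log (q j) := by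
  have h (x y : ℝ) : x * y * Real.log (x * y) = x * Real.log x * y + x * (y * Real.log y) := by
    rcases eq_or_ne x 0 with rfl | hx
    · simp
    rcases eq_or_ne y 0 with rfl | hy
    · simp
    rw [Real.log_mul hx hy]
    ring
  simp only [h, Fintype.sum_prod_type, Finset.sum_add_distrib, ← Finset.mul_sum, ← Finset.sum_mul,
    hp, hq, mul_one, one_mul]

end Classical

section UnitaryConj

variable {n : Type*} [Fintype n] [DecidableEq n]

lemma unitary_conj_mul_unitary_conj (U : unitaryGroup n ℂ) (X Y : Matrix n n ℂ) :
    (U : Matrix n n ℂ) * X * star (U : Matrix n n ℂ) *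
        ((U : Matrix n n ℂ) * Y * star (U : Matrix n n ℂ))
      = (U : Matrix n n ℂ) * (X * Y) * star (U : Matrix n n ℂ) := by
  simp only [← mul_assoc]
  rw [mul_assoc _ (star _), mem_unitaryGroup_iff'.mp U.2, mul_one]

lemma trace_unitary_conj (U : unitaryGroup n ℂ) (X : Matrix n n ℂ) :
    ((U : Matrix n n ℂ) * X * star (U : Matrix n n ℂ)).trace = X.trace := by
  rw [trace_mul_cycle, mem_unitaryGroup_iff'.mp U.2, one_mul]

lemma trace_mul_unitary_conj_diagonal (X : Matrix n n ℂ) (U : unitaryGroup n ℂ) (d : n → ℝ) :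
    (X * ((U : Matrix n n ℂ) * diagonal (fun i => (d i : ℂ)) * star (U : Matrix n n ℂ))).trace
      = ∑ j, (star (U : Matrix n n ℂ) * X * U) j j * d j := by
  rw [← mul_assoc, ← mul_assoc, trace_mul_comm, ← mul_assoc, ← mul_assoc]
  simp only [trace, diag, mul_diagonal]

lemma unitary_conj_diagonal_apply_self (U : unitaryGroup n ℂ) (d : n → ℝ) (j : n) :
    ((U : Matrix n n ℂ) * diagonal (fun i => (d i : ℂ)) * star (U : Matrix n n ℂ)) j j
      = ((of fun i k => Complex.normSq ((U : Matrix n n ℂ) i k)) *ᵥ d) j := by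
  rw [mul_apply]
  simp only [mulVec, dotProduct, of_apply]
  push_cast
  refine Finset.sum_congr rfl fun i _ => ?_
  rw [mul_diagonal, star_apply, RCLike.star_def, Complex.normSq_eq_conj_mul_self]
  ring

lemma sum_normSq_unitary_row (U : unitaryGroup n ℂ) (i : n) :
    ∑ j, Complex.normSq ((U : Matrix n n ℂ) i j) = 1 := by
  have h := congr_fun₂ (mem_unitaryGroup_iff.mp U.2) i i
  simp only [mul_apply, star_apply, RCLike.star_def, one_apply_eq, Complex.mul_conj] at h
  exact_mod_cast h

lemma normSq_unitary_mem_doublyStochastic (U : unitaryGroup n ℂ) :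
    of (fun i j => Complex.normSq ((U : Matrix n n ℂ) i j)) ∈ doublyStochastic ℝ n := by
  rw [mem_doublyStochastic_iff_sum]
  refine ⟨fun i j => Complex.normSq_nonneg _, sum_normSq_unitary_row U, fun j => ?_⟩
  simpa [star_apply] using sum_normSq_unitary_row (star U) j

lemma isHermitian_unitary_conj_diagonal (U : unitaryGroup n ℂ) (d : n → ℝ) :
    ((U : Matrix n n ℂ) * diagonal (fun i => (d i : ℂ)) * star (U : Matrix n n ℂ)).IsHermitian :=
  isHermitian_mul_mul_conjTranspose _ <| isHermitian_diagonal_iff.mpr fun _ => Complex.conj_ofReal _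

lemma Matrix.IsHermitian.eq_unitary_conj_diagonal_eigenvalues {X : Matrix n n ℂ}
    (hX : X.IsHermitian) :
    X = (hX.eigenvectorUnitary : Matrix n n ℂ) * diagonal (fun i => (hX.eigenvalues i : ℂ)) *
      star (hX.eigenvectorUnitary : Matrix n n ℂ) :=
  hX.spectral_theorem

lemma Matrix.IsHermitian.sum_eigenvalues_eq_one_s9 {X : Matrix n n ℂ} (hX : X.IsHermitian)
    (h1 : X.trace = 1) : ∑ i, hX.eigenvalues i = 1 :=
  RCLike.ofReal_injective (K := ℂ) <| by simpa [h1] using hX.trace_eq_sum_eigenvalues.symm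

lemma Matrix.IsHermitian.sum_eigenvalues_comp_eq {X : Matrix n n ℂ} (hX : X.IsHermitian)
    (U : unitaryGroup n ℂ) (d : n → ℝ)
    (h : X = (U : Matrix n n ℂ) * diagonal (fun i => (d i : ℂ)) * star (U : Matrix n n ℂ))
    (f : ℝ → ℝ) : ∑ i, f (hX.eigenvalues i) = ∑ i, f (d i) := by
  have hchar : X.charpoly = ((Finset.univ.val.map fun i => (d i : ℂ)).map
      fun a => Polynomial.X - Polynomial.C a).prod := by
    rw [h, charpoly_mul_comm, ← mul_assoc, mem_unitaryGroup_iff'.mp U.2, one_mul,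
      charpoly_diagonal, Multiset.map_map]
    rfl
  have hroots := hX.roots_charpoly_eq_eigenvalues
  rw [hchar, Polynomial.roots_multiset_prod_X_sub_C] at hroots
  have hmap : Finset.univ.val.map d = Finset.univ.val.map hX.eigenvalues :=
    Multiset.map_injective (RCLike.ofReal_injective (K := ℂ)) <| by
      simpa [Multiset.map_map] using hroots
  simpa only [Multiset.map_map, Function.comp_def, Finset.sum_eq_multiset_sum] using
    (congr_arg (fun s => (s.map f).sum) hmap).symm

lemma isHermitian_mlog (X : Matrix n n ℂ) : (mlog X).IsHermitian := by
  rw [mlog]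
  split_ifs
  · exact isHermitian_unitary_conj_diagonal _ _
  · exact isHermitian_zero

lemma Matrix.IsHermitian.trace_mul_mlog {X : Matrix n n ℂ} (hX : X.IsHermitian) :
    (X * mlog X).trace = ((∑ i, hX.eigenvalues i * Real.log (hX.eigenvalues i) : ℝ) : ℂ) := by
  rw [mlog, dif_pos hX]
  conv_lhs => enter [1, 1]; rw [hX.eq_unitary_conj_diagonal_eigenvalues]
  rw [unitary_conj_mul_unitary_conj, trace_unitary_conj, diagonal_mul_diagonal, trace_diagonal]
  push_cast
  rfl

lemma trace_mul_mlog_of_eq_unitary_conj {X : Matrix n n ℂ} (U : unitaryGroup n ℂ) (d : n → ℝ)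
    (h : X = (U : Matrix n n ℂ) * diagonal (fun i => (d i : ℂ)) * star (U : Matrix n n ℂ)) :
    (X * mlog X).trace = ((∑ i, d i * Real.log (d i) : ℝ) : ℂ) := by
  have hX : X.IsHermitian := h ▸ isHermitian_unitary_conj_diagonal U d
  rw [hX.trace_mul_mlog, hX.sum_eigenvalues_comp_eq U d h (fun x => x * Real.log x)]

lemma ker_toLin'_eq_bot_of_posDef {ρ : Matrix n n ℂ} (hρ : ρ.PosDef) :
    LinearMap.ker (toLin' ρ) = ⊥ :=
  LinearMap.ker_eq_bot.mpr (mulVec_injective_iff_isUnit.mpr hρ.isUnit)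

end UnitaryConj

section Gibbs

variable {n : Type*} [Fintype n] [DecidableEq n]

def gibbsState (M : Matrix n n ℂ) : Matrix n n ℂ :=
  ((NormedSpace.exp M).trace)⁻¹ • NormedSpace.exp M

def freeEnergy (M τ : Matrix n n ℂ) : ℝ :=
  (τ * mlog τ).trace.re - (τ * M).trace.re

variable {M : Matrix n n ℂ}

lemma Matrix.IsHermitian.exp_eq (hM : M.IsHermitian) :
    NormedSpace.exp M = (hM.eigenvectorUnitary : Matrix n n ℂ) *
      diagonal (fun j => (Real.exp (hM.eigenvalues j) : ℂ)) *
      star (hM.eigenvectorUnitary : Matrix n n ℂ) := by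
  have hW : IsUnit (hM.eigenvectorUnitary : Matrix n n ℂ) :=
    ⟨Unitary.toUnits hM.eigenvectorUnitary, rfl⟩
  have hWinv : (hM.eigenvectorUnitary : Matrix n n ℂ)⁻¹
      = star (hM.eigenvectorUnitary : Matrix n n ℂ) :=
    inv_eq_right_inv (mem_unitaryGroup_iff.mp hM.eigenvectorUnitary.2)
  conv_lhs => rw [hM.eq_unitary_conj_diagonal_eigenvalues, ← hWinv, exp_conj _ _ hW,
    exp_diagonal]
  congr 3
  funext j
  rw [Pi.coe_exp, ← Complex.exp_eq_exp_ℂ, Complex.ofReal_exp]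

lemma Matrix.IsHermitian.gibbsState_eq (hM : M.IsHermitian) :
    gibbsState M = (hM.eigenvectorUnitary : Matrix n n ℂ) *
      diagonal (fun j =>
        ((Real.exp (hM.eigenvalues j) / ∑ k, Real.exp (hM.eigenvalues k) : ℝ) : ℂ)) *
      star (hM.eigenvectorUnitary : Matrix n n ℂ) := by
  rw [gibbsState, hM.exp_eq, trace_unitary_conj, trace_diagonal, ← smul_mul_assoc,
    ← mul_smul_comm, ← diagonal_smul]
  congr 3
  funext j
  push_cast
  simp [div_eq_inv_mul]

lemma Matrix.IsHermitian.posSemidef_gibbsState (hM : M.IsHermitian) :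
    (gibbsState M).PosSemidef := by
  rw [hM.gibbsState_eq]
  refine (posSemidef_diagonal_iff.mpr fun j => ?_).mul_mul_conjTranspose_same _
  exact Complex.zero_le_real.mpr (div_nonneg (Real.exp_pos _).le
    (Finset.sum_nonneg fun k _ => (Real.exp_pos _).le))

lemma Matrix.IsHermitian.neg_log_sum_exp_le_freeEnergy (hM : M.IsHermitian) {τ : Matrix n n ℂ}
    (hτ : τ.PosSemidef) (hτ1 : τ.trace = 1) :
    -Real.log (∑ k, Real.exp (hM.eigenvalues k)) ≤ freeEnergy M τ := by
  obtain ⟨U, hU⟩ : ∃ U : unitaryGroup n ℂ,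
      star (hM.eigenvectorUnitary : Matrix n n ℂ) * τ * hM.eigenvectorUnitary
        = (U : Matrix n n ℂ) * diagonal (fun i => (hτ.1.eigenvalues i : ℂ)) *
          star (U : Matrix n n ℂ) := by
    refine ⟨star hM.eigenvectorUnitary * hτ.1.eigenvectorUnitary, ?_⟩
    conv_lhs => rw [hτ.1.eq_unitary_conj_diagonal_eigenvalues]
    simp only [Submonoid.coe_mul, Unitary.coe_star, star_mul, star_star, mul_assoc]
  have hS := normSq_unitary_mem_doublyStochastic U
  set s := (of fun i k => Complex.normSq ((U : Matrix n n ℂ) i k)) *ᵥ hτ.1.eigenvalues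
  have hτM : (τ * M).trace.re = ∑ j, s j * hM.eigenvalues j := by
    conv_lhs => rw [hM.eq_unitary_conj_diagonal_eigenvalues]
    simp only [trace_mul_unitary_conj_diagonal, hU, unitary_conj_diagonal_apply_self,
      ← Complex.ofReal_mul, ← Complex.ofReal_sum, Complex.ofReal_re, s]
  have hjensen : ∑ j, s j * Real.log (s j)
      ≤ ∑ i, hτ.1.eigenvalues i * Real.log (hτ.1.eigenvalues i) :=
    Real.convexOn_mul_log.sum_map_mulVec_le hS fun i => hτ.eigenvalues_nonneg i
  have hgibbs := sum_mul_sub_log_le_log_sum_exp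
    (nonneg_mulVec_of_mem_rowStochastic
      (mem_doublyStochastic_iff_mem_rowStochastic_and_mem_colStochastic.mp hS).1
      hτ.eigenvalues_nonneg)
    ((sum_mulVec_of_mem_doublyStochastic hS).trans (hτ.1.sum_eigenvalues_eq_one_s9 hτ1))
    hM.eigenvalues
  rw [freeEnergy, hτ.1.trace_mul_mlog, Complex.ofReal_re, hτM]
  simp only [mul_sub, Finset.sum_sub_distrib] at hgibbs
  linarith

variable [Nonempty n]

lemma Matrix.IsHermitian.trace_gibbsState (hM : M.IsHermitian) : (gibbsState M).trace = 1 := by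
  have hZ : 0 < ∑ k, Real.exp (hM.eigenvalues k) :=
    Finset.sum_pos (fun k _ => Real.exp_pos _) Finset.univ_nonempty
  rw [hM.gibbsState_eq, trace_unitary_conj, trace_diagonal, ← Complex.ofReal_sum,
    ← Finset.sum_div, div_self hZ.ne', Complex.ofReal_one]

lemma Matrix.IsHermitian.freeEnergy_gibbsState (hM : M.IsHermitian) :
    freeEnergy M (gibbsState M) = -Real.log (∑ k, Real.exp (hM.eigenvalues k)) := by
  have hτ := hM.gibbsState_eq
  rw [freeEnergy, trace_mul_mlog_of_eq_unitary_conj _ _ hτ, hτ]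
  conv_lhs => enter [2, 1, 1, 2]; rw [hM.eq_unitary_conj_diagonal_eigenvalues]
  rw [unitary_conj_mul_unitary_conj, trace_unitary_conj, diagonal_mul_diagonal, trace_diagonal,
    ← sum_mul_sub_log_exp_div_eq hM.eigenvalues]
  simp only [← Complex.ofReal_mul, ← Complex.ofReal_sum, Complex.ofReal_re, mul_sub,
    Finset.sum_sub_distrib]
  ring

theorem Matrix.IsHermitian.freeEnergy_gibbsState_le (hM : M.IsHermitian) {τ : Matrix n n ℂ}
    (hτ : τ.PosSemidef) (hτ1 : τ.trace = 1) : freeEnergy M (gibbsState M) ≤ freeEnergy M τ :=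
  hM.freeEnergy_gibbsState ▸ hM.neg_log_sum_exp_le_freeEnergy hτ hτ1

end Gibbs

section PartialTrace

variable {n m : Type*} [Fintype n]

lemma ptrA_apply (X : Matrix (n × m) (n × m) ℂ) (b b' : m) :
    ptrA X b b' = ∑ a, X (a, b) (a, b') := rfl

lemma conjTranspose_ptrA (X : Matrix (n × m) (n × m) ℂ) : (ptrA X)ᴴ = ptrA Xᴴ := by
  ext b b'
  simp [ptrA_apply, conjTranspose_apply]

lemma ptrA_kronecker_one_mul_comm_s9 [Fintype m] [DecidableEq m] (σ : Matrix n n ℂ)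
    (X : Matrix (n × m) (n × m) ℂ) :
    ptrA ((σ ⊗ₖ (1 : Matrix m m ℂ)) * X) = ptrA (X * (σ ⊗ₖ (1 : Matrix m m ℂ))) := by
  ext b b'
  simp only [ptrA_apply, mul_apply, Fintype.sum_prod_type, kroneckerMap_apply, one_apply,
    mul_ite, ite_mul, mul_one, mul_zero, zero_mul, Finset.sum_ite_eq, Finset.sum_ite_eq',
    Finset.mem_univ, if_true]
  rw [Finset.sum_comm]
  simp only [mul_comm]

lemma trace_mul_ptrA [Fintype m] [DecidableEq n] (τ : Matrix m m ℂ) (X : Matrix (n × m) (n × m) ℂ) :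
    (τ * ptrA X).trace = (((1 : Matrix n n ℂ) ⊗ₖ τ) * X).trace := by
  simp only [trace, diag, mul_apply, ptrA_apply, Fintype.sum_prod_type, kroneckerMap_apply,
    one_apply, ite_mul, one_mul, zero_mul, Finset.mul_sum, Finset.sum_ite_irrel,
    Finset.sum_const_zero, Finset.sum_ite_eq, Finset.mem_univ, if_true]
  conv_rhs => rw [Finset.sum_comm]
  exact Finset.sum_congr rfl fun _ _ => Finset.sum_comm

lemma trace_kronecker_mul [Fintype m] [DecidableEq n] [DecidableEq m] (σ : Matrix n n ℂ)
    (τ : Matrix m m ℂ) (X : Matrix (n × m) (n × m) ℂ) :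
    ((σ ⊗ₖ τ) * X).trace = (τ * ptrA ((σ ⊗ₖ (1 : Matrix m m ℂ)) * X)).trace := by
  rw [trace_mul_ptrA, ← mul_assoc, ← mul_kronecker_mul, one_mul, mul_one]

lemma isHermitian_ptrA_kronecker_one_mul [Fintype m] [DecidableEq m] {σ : Matrix n n ℂ}
    {L : Matrix (n × m) (n × m) ℂ} (hσ : σ.IsHermitian) (hL : L.IsHermitian) :
    (ptrA ((σ ⊗ₖ (1 : Matrix m m ℂ)) * L)).IsHermitian := by
  rw [IsHermitian, conjTranspose_ptrA, conjTranspose_mul, conjTranspose_kronecker, hσ.eq, hL.eq,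
    conjTranspose_one, ← ptrA_kronecker_one_mul_comm_s9]

end PartialTrace

section ProductStates

variable {n m : Type*} [Fintype n] [DecidableEq n] [Fintype m] [DecidableEq m]

lemma kronecker_unitary_conj_diagonal (U : unitaryGroup n ℂ) (V : unitaryGroup m ℂ)
    (p : n → ℝ) (q : m → ℝ) :
    ((U : Matrix n n ℂ) * diagonal (fun i => (p i : ℂ)) * star (U : Matrix n n ℂ)) ⊗ₖ
        ((V : Matrix m m ℂ) * diagonal (fun j => (q j : ℂ)) * star (V : Matrix m m ℂ))
      = ((⟨_, kronecker_mem_unitary U.2 V.2⟩ : unitaryGroup (n × m) ℂ) : Matrix _ _ ℂ) *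
        diagonal (fun ij => ((p ij.1 * q ij.2 : ℝ) : ℂ)) *
        star ((⟨_, kronecker_mem_unitary U.2 V.2⟩ : unitaryGroup (n × m) ℂ) : Matrix _ _ ℂ) := by
  simp only [mul_kronecker_mul, diagonal_kronecker_diagonal, star_eq_conjTranspose,
    conjTranspose_kronecker, Complex.ofReal_mul]

lemma trace_kronecker_mul_mlog {σ : Matrix n n ℂ} {τ : Matrix m m ℂ} (hσ : σ.IsHermitian)
    (hτ : τ.IsHermitian) (hσ1 : σ.trace = 1) (hτ1 : τ.trace = 1) :
    ((σ ⊗ₖ τ) * mlog (σ ⊗ₖ τ)).trace = (σ * mlog σ).trace + (τ * mlog τ).trace := by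
  have hστ := kronecker_unitary_conj_diagonal hσ.eigenvectorUnitary hτ.eigenvectorUnitary
    hσ.eigenvalues hτ.eigenvalues
  rw [← hσ.eq_unitary_conj_diagonal_eigenvalues, ← hτ.eq_unitary_conj_diagonal_eigenvalues] at hστ
  rw [trace_mul_mlog_of_eq_unitary_conj _ _ hστ, hσ.trace_mul_mlog, hτ.trace_mul_mlog,
    sum_mul_log_mul_eq (hσ.sum_eigenvalues_eq_one_s9 hσ1) (hτ.sum_eigenvalues_eq_one_s9 hτ1),
    Complex.ofReal_add]

lemma relEnt_kronecker {ρ : Matrix (n × m) (n × m) ℂ} (hρ : ρ.PosDef) {σ : Matrix n n ℂ}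
    {τ : Matrix m m ℂ} (hσ : σ.IsHermitian) (hτ : τ.IsHermitian) (hσ1 : σ.trace = 1)
    (hτ1 : τ.trace = 1) :
    relEnt (σ ⊗ₖ τ) ρ = (((σ * mlog σ).trace.re
      + freeEnergy (ptrA ((σ ⊗ₖ (1 : Matrix m m ℂ)) * mlog ρ)) τ : ℝ) : EReal) := by
  rw [relEnt, if_pos (by simp [ker_toLin'_eq_bot_of_posDef hρ]), mul_sub, trace_sub,
    trace_kronecker_mul_mlog hσ hτ hσ1 hτ1, trace_kronecker_mul, Complex.sub_re, Complex.add_re,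
    freeEnergy, add_sub_assoc]

end ProductStates

theorem tumula_partial_minimizer_general {A B : Type*} [Fintype A] [DecidableEq A]
    [Fintype B] [DecidableEq B] [Nonempty B]
    (ρ : MState (A × B)) (hρ : ρ.mat.PosDef) (σ : MState A)
    (M : Matrix B B ℂ)
    (hM : M = ptrA ((σ.mat ⊗ₖ (1 : Matrix B B ℂ)) * mlog ρ.mat))
    (τstar : Matrix B B ℂ)
    (hτstar : τstar = ((NormedSpace.exp M).trace)⁻¹ • NormedSpace.exp M) :
    τstar.PosSemidef ∧ τstar.trace = 1 ∧
      ∀ τ : MState B, relEnt (σ.mat ⊗ₖ τstar) ρ.mat ≤ relEnt (σ.mat ⊗ₖ τ.mat) ρ.mat := by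
  have hMH : M.IsHermitian :=
    hM ▸ isHermitian_ptrA_kronecker_one_mul σ.posSemidef.1 (isHermitian_mlog ρ.mat)
  change τstar = gibbsState M at hτstar
  subst hτstar
  refine ⟨hMH.posSemidef_gibbsState, hMH.trace_gibbsState, fun τ => ?_⟩
  rw [relEnt_kronecker hρ σ.posSemidef.1 hMH.posSemidef_gibbsState.1 σ.trace_one
      hMH.trace_gibbsState, relEnt_kronecker hρ σ.posSemidef.1 τ.posSemidef.1 σ.trace_one
      τ.trace_one, ← hM, EReal.coe_le_coe_iff]
  exact add_le_add_right (hMH.freeEnergy_gibbsState_le τ.posSemidef τ.trace_one) _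

/-- Gibbs-form partial minimizer for the tumula information (Theorem 2(a)). -/
theorem tumula_partial_minimizer {A B : Type*} [Fintype A] [DecidableEq A] [Nonempty A]
    [Fintype B] [DecidableEq B] [Nonempty B]
    (ρ : MState (A × B)) (hρ : ρ.mat.PosDef) (σ : MState A)
    (M : Matrix B B ℂ)
    (hM : M = ptrA ((σ.mat ⊗ₖ (1 : Matrix B B ℂ)) * mlog ρ.mat))
    (τstar : Matrix B B ℂ)
    (hτstar : τstar = ((NormedSpace.exp M).trace)⁻¹ • NormedSpace.exp M) :
    τstar.PosSemidef ∧ τstar.trace = 1 ∧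
      ∀ τ : MState B, relEnt (σ.mat ⊗ₖ τstar) ρ.mat ≤ relEnt (σ.mat ⊗ₖ τ.mat) ρ.mat :=
  tumula_partial_minimizer_general ρ hρ σ M hM τstar hτstar

end
end

section
/- Upper bound on the classical tumula information (Proposition 3): Let X and Y be nonempty finite types and P a probability distribution on X × Y. Then T(X:Y)_P ≤ Real.log (min (Fintype.card X) (Fintype.card Y)) (an inequality in [0,+∞]). In fact, T(X:Y)_P ≤ − Real.log (⨆ x, ∑ y, P (x,y)). -/
open scoped BigOperators

noncomputable section

/-- A probability distribution on a finite type. -/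
structure PDist (X : Type*) [Fintype X] where
  prob : X → ℝ
  nonneg : ∀ x, 0 ≤ prob x
  sum_one : ∑ x, prob x = 1

-- Classical relative entropy (Kullback–Leibler divergence), valued in `(-∞,∞]`.
open Classical in
noncomputable def cDKL {X : Type*} [Fintype X] (P Q : X → ℝ) : EReal :=
  if ∀ x, Q x = 0 → P x = 0 then
    ((∑ x, if P x = 0 then (0 : ℝ) else P x * Real.log (P x / Q x) : ℝ) : EReal)
  else ⊤

/-- Classical tumula information of a joint probability mass function on `X × Y`. -/
noncomputable def cT {X Y : Type*} [Fintype X] [Fintype Y] (P : X × Y → ℝ) : EReal :=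
  ⨅ (Q : PDist X) (R : PDist Y), cDKL (fun p => Q.prob p.1 * R.prob p.2) P

/-- A classical channel from `X` to `Y`. -/
structure Channel (X Y : Type*) [Fintype X] [Fintype Y] where
  prob : X → Y → ℝ
  nonneg : ∀ x y, 0 ≤ prob x y
  sum_one : ∀ x, ∑ y, prob x y = 1

/-- Classical channel tumula information. -/
noncomputable def chT {X Y : Type*} [Fintype X] [Fintype Y] (W : Channel X Y) : EReal :=
  ⨆ P : PDist X, cT (fun p => P.prob p.1 * W.prob p.1 p.2)

/-!
Let `p` be the first marginal of `P` and `a` a point where it is maximal. The product of the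
point mass at `a` with the conditional distribution `P (a, ·) / p a` agrees with `P / p a` on its
support, so its divergence from `P` is `-log (p a)`; this bounds `T(X:Y)_P`, and `p a ≥ 1 / |X|`
turns it into `log |X|`. The second marginal gives `log |Y|` in the same way.
-/

namespace PDist

variable {X Y : Type*} [Fintype X] [Fintype Y]

def dirac [DecidableEq X] (a : X) : PDist X where
  prob x := if x = a then 1 else 0
  nonneg x := by split_ifs <;> norm_num
  sum_one := by simp

def normalize (f : X → ℝ) (hf : ∀ x, 0 ≤ f x) (hs : 0 < ∑ x, f x) : PDist X where
  prob x := f x / ∑ x', f x'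
  nonneg x := div_nonneg (hf x) hs.le
  sum_one := by rw [← Finset.sum_div, div_self hs.ne']

def prod (Q : PDist X) (R : PDist Y) : PDist (X × Y) where
  prob p := Q.prob p.1 * R.prob p.2
  nonneg p := mul_nonneg (Q.nonneg _) (R.nonneg _)
  sum_one := by rw [Fintype.sum_prod_type, ← Finset.sum_mul_sum, Q.sum_one, R.sum_one, one_mul]

def fst (P : PDist (X × Y)) : PDist X where
  prob x := ∑ y, P.prob (x, y)
  nonneg x := Finset.sum_nonneg fun y _ => P.nonneg (x, y)
  sum_one := by rw [← Fintype.sum_prod_type, P.sum_one]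

def snd (P : PDist (X × Y)) : PDist Y where
  prob y := ∑ x, P.prob (x, y)
  nonneg y := Finset.sum_nonneg fun x _ => P.nonneg (x, y)
  sum_one := by rw [← Fintype.sum_prod_type_right, P.sum_one]

theorem one_le_card_mul_of_forall_le (Q : PDist X) {a : X} (ha : ∀ x, Q.prob x ≤ Q.prob a) :
    1 ≤ Fintype.card X * Q.prob a :=
  calc (1 : ℝ) = ∑ x, Q.prob x := Q.sum_one.symm
    _ ≤ ∑ _x : X, Q.prob a := Finset.sum_le_sum fun x _ => ha x
    _ = Fintype.card X * Q.prob a := by rw [Finset.sum_const, Finset.card_univ, nsmul_eq_mul]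

theorem prob_pos_of_forall_le (Q : PDist X) {a : X} (ha : ∀ x, Q.prob x ≤ Q.prob a) :
    0 < Q.prob a :=
  pos_of_mul_pos_right (one_pos.trans_le (Q.one_le_card_mul_of_forall_le ha)) (Nat.cast_nonneg _)

theorem neg_log_prob_le_log_card (Q : PDist X) {a : X} (ha : ∀ x, Q.prob x ≤ Q.prob a) :
    -Real.log (Q.prob a) ≤ Real.log (Fintype.card X) := by
  have hpos := Q.prob_pos_of_forall_le ha
  rw [← Real.log_inv]
  exact Real.log_le_log (inv_pos.2 hpos)
    ((inv_le_iff_one_le_mul₀ hpos).2 (Q.one_le_card_mul_of_forall_le ha))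

end PDist

theorem cDKL_eq_neg_log_of_eq_zero_or_eq_div {X : Type*} [Fintype X] (Q : PDist X)
    (P : X → ℝ) {s : ℝ} (hQ : ∀ x, Q.prob x = 0 ∨ Q.prob x = P x / s) :
    cDKL Q.prob P = ((-Real.log s : ℝ) : EReal) := by
  have habs : ∀ x, P x = 0 → Q.prob x = 0 := fun x hx => by
    simpa [hx] using hQ x
  have hterm : ∀ x, (if Q.prob x = 0 then (0 : ℝ) else Q.prob x * Real.log (Q.prob x / P x))
      = Q.prob x * -Real.log s := by
    intro x
    by_cases hQx : Q.prob x = 0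
    · simp [hQx]
    have h := (hQ x).resolve_left hQx
    have hP : P x ≠ 0 := fun hP => hQx (habs x hP)
    rw [if_neg hQx, h, div_div_cancel_left' hP, Real.log_inv]
  rw [cDKL, if_pos habs, Finset.sum_congr rfl fun x _ => hterm x, ← Finset.sum_mul,
    Q.sum_one, one_mul]

section ProductBounds

variable {X Y : Type*} [Fintype X] [Fintype Y]

theorem cT_le_cDKL_prod (P : X × Y → ℝ) (Q : PDist X) (R : PDist Y) :
    cT P ≤ cDKL (Q.prod R).prob P :=
  iInf_le_of_le Q (iInf_le _ R)

theorem cT_le_neg_log_fst [DecidableEq X] (P : PDist (X × Y)) {a : X} (ha : 0 < P.fst.prob a) :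
    cT P.prob ≤ ((-Real.log (P.fst.prob a) : ℝ) : EReal) := by
  refine (cT_le_cDKL_prod P.prob (.dirac a) (.normalize _ (fun y => P.nonneg (a, y)) ha)).trans
    (cDKL_eq_neg_log_of_eq_zero_or_eq_div _ _ fun ⟨x, y⟩ => ?_).le
  by_cases hx : x = a
  · subst hx; simp [PDist.prod, PDist.dirac, PDist.normalize, PDist.fst]
  · simp [PDist.prod, PDist.dirac, hx]

theorem cT_le_neg_log_snd [DecidableEq Y] (P : PDist (X × Y)) {b : Y} (hb : 0 < P.snd.prob b) :
    cT P.prob ≤ ((-Real.log (P.snd.prob b) : ℝ) : EReal) := by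
  refine (cT_le_cDKL_prod P.prob (.normalize _ (fun x => P.nonneg (x, b)) hb) (.dirac b)).trans
    (cDKL_eq_neg_log_of_eq_zero_or_eq_div _ _ fun ⟨x, y⟩ => ?_).le
  by_cases hy : y = b
  · subst hy; simp [PDist.prod, PDist.dirac, PDist.normalize, PDist.snd]
  · simp [PDist.prod, PDist.dirac, hy]

end ProductBounds

/-- Upper bound on the classical tumula information (Proposition 3). -/
theorem classical_tumula_le {X Y : Type*} [Fintype X] [Nonempty X] [Fintype Y] [Nonempty Y]
    (P : PDist (X × Y)) :
    cT P.prob ≤ ((Real.log (min (Fintype.card X) (Fintype.card Y)) : ℝ) : EReal) ∧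
      cT P.prob ≤ ((-Real.log (⨆ x : X, ∑ y : Y, P.prob (x, y)) : ℝ) : EReal) := by
  classical
  obtain ⟨a, ha⟩ := Finite.exists_max P.fst.prob
  obtain ⟨b, hb⟩ := Finite.exists_max P.snd.prob
  have hfst := cT_le_neg_log_fst P (P.fst.prob_pos_of_forall_le ha)
  have hsnd := cT_le_neg_log_snd P (P.snd.prob_pos_of_forall_le hb)
  have hsup : (⨆ x, P.fst.prob x) = P.fst.prob a :=
    le_antisymm (ciSup_le ha) (le_ciSup (Finite.bddAbove_range _) a)
  refine ⟨?_, hsup ▸ hfst⟩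
  rcases min_choice (Fintype.card X : ℝ) (Fintype.card Y) with h | h <;> rw [h]
  · exact hfst.trans (EReal.coe_le_coe_iff.2 (P.fst.neg_log_prob_le_log_card ha))
  · exact hsnd.trans (EReal.coe_le_coe_iff.2 (P.snd.neg_log_prob_le_log_card hb))

end
end

section
/- Tightness of the upper bound on the classical tumula information (Proposition 3): Let X be a nonempty finite type and define the joint probability distribution P on X × X by P (x,y) := (if x = y then 1 else 0) / (Fintype.card X). Then T(X:X)_P = Real.log (Fintype.card X). -/
open scoped BigOperators

noncomputable section

lemma aux_cDKL_eq {X : Type*} [Fintype X] [DecidableEq X] [Nonempty X]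
    (Q R : PDist X) (h : ∀ x y : X, x ≠ y → Q.prob x * R.prob y = 0) :
    cDKL (fun p : X × X => Q.prob p.1 * R.prob p.2)
        (fun p : X × X => (if p.1 = p.2 then (1 : ℝ) else 0) / (Fintype.card X))
      = ((Real.log (Fintype.card X) : ℝ) : EReal) := by
  have hn : ((Fintype.card X : ℝ)) ≠ 0 := by
    exact_mod_cast Fintype.card_ne_zero
  -- find the common support point
  obtain ⟨a, _, ha⟩ := Finset.exists_ne_zero_of_sum_ne_zero
    (by rw [Q.sum_one]; exact one_ne_zero)
  have hRy : ∀ y, y ≠ a → R.prob y = 0 := fun y hy => by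
    have := h a y (Ne.symm hy)
    rcases mul_eq_zero.mp this with h1 | h1
    · exact absurd h1 ha
    · exact h1
  have hRa : R.prob a = 1 := by
    have := R.sum_one
    rwa [Finset.sum_eq_single a (fun y _ hy => hRy y hy) (fun hmem => absurd (Finset.mem_univ a) hmem)] at this
  have hQx : ∀ x, x ≠ a → Q.prob x = 0 := fun x hx => by
    have := h x a hx
    rcases mul_eq_zero.mp this with h1 | h1
    · exact h1
    · rw [hRa] at h1; exact absurd h1 one_ne_zero
  have hQa : Q.prob a = 1 := by
    have := Q.sum_one
    rwa [Finset.sum_eq_single a (fun y _ hy => hQx y hy) (fun hmem => absurd (Finset.mem_univ a) hmem)] at this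
  have hzero : ∀ p : X × X, p ≠ (a, a) → Q.prob p.1 * R.prob p.2 = 0 := by
    rintro ⟨x, y⟩ hp
    by_cases hx : x = a
    · by_cases hy : y = a
      · exact absurd (by rw [hx, hy]) hp
      · rw [hRy y hy, mul_zero]
    · rw [hQx x hx, zero_mul]
  have hcond : ∀ p : X × X,
      (if p.1 = p.2 then (1 : ℝ) else 0) / (Fintype.card X) = 0 →
      Q.prob p.1 * R.prob p.2 = 0 := by
    rintro ⟨x, y⟩ hp
    by_cases hxy : x = y
    · exfalso
      simp only [hxy, if_pos rfl] at hp
      rcases div_eq_zero_iff.mp hp with h1 | h1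
      · exact one_ne_zero h1
      · exact hn h1
    · exact h x y hxy
  unfold cDKL
  rw [if_pos hcond]
  congr 1
  rw [Finset.sum_eq_single (a, a)]
  · simp [hQa, hRa, one_div_one_div]
  · intro p _ hp
    rw [if_pos (hzero p hp)]
  · intro hmem
    exact absurd (Finset.mem_univ _) hmem

/-- Tightness of the upper bound on the classical tumula information (Proposition 3). -/
theorem classical_tumula_eq_log_card {X : Type*} [Fintype X] [DecidableEq X] [Nonempty X] :
    cT (fun p : X × X => (if p.1 = p.2 then (1 : ℝ) else 0) / (Fintype.card X))
      = ((Real.log (Fintype.card X) : ℝ) : EReal) := by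
  apply le_antisymm
  · -- upper bound: use δ_a × δ_a
    obtain ⟨a⟩ := ‹Nonempty X›
    set δ : PDist X := ⟨fun x => if x = a then 1 else 0,
      fun x => by positivity,
      by simp⟩ with hδ
    have hle : cT (fun p : X × X => (if p.1 = p.2 then (1 : ℝ) else 0) / (Fintype.card X))
        ≤ cDKL (fun p : X × X => δ.prob p.1 * δ.prob p.2)
          (fun p : X × X => (if p.1 = p.2 then (1 : ℝ) else 0) / (Fintype.card X)) := by
      unfold cT
      exact iInf₂_le (f := fun (Q R : PDist X) => cDKL (fun p : X × X => Q.prob p.1 * R.prob p.2)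
        (fun p : X × X => (if p.1 = p.2 then (1 : ℝ) else 0) / (Fintype.card X))) δ δ
    refine hle.trans_eq ?_
    apply aux_cDKL_eq
    intro x y hxy
    by_cases hx : x = a
    · have hy : y ≠ a := fun hya => hxy (by rw [hx, hya])
      simp [hδ, if_neg hy]
    · simp [hδ, if_neg hx]
  · -- lower bound
    unfold cT
    refine le_iInf fun Q => le_iInf fun R => ?_
    by_cases hc : ∀ x y : X, x ≠ y → Q.prob x * R.prob y = 0
    · rw [aux_cDKL_eq Q R hc]
    · unfold cDKL
      rw [if_neg]
      · exact le_top
      · intro hcond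
        apply hc
        intro x y hxy
        exact hcond (x, y) (by simp [if_neg hxy])

end
end
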